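/- arXiv:1702.03140 — 8 statements merged into one kernel-verified Lean document; each statement's English description precedes it below -/
import Mathlib

section
/- Let X and Y be Banach spaces. If X or Y is octahedral, then X ⊕₁ Y (the direct sum equipped with the norm ‖(x,y)‖ = ‖x‖ + ‖y‖) is also octahedral. -/
open Filter Topology

noncomputable section

/-- A Banach space `X` is octahedral if for every finite-dimensional subspace `E` of `X`
and every `ε > 0` there is a norm-one `y ∈ X` with `‖x + y‖ ≥ (1-ε)(‖x‖+‖y‖)` for all
`x ∈ E`. -/
def Octahedral (X : Type*) [NormedAddCommGroup X] [NormedSpace ℝ X] : Prop :=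
  ∀ E : Subspace ℝ X, FiniteDimensional ℝ E → ∀ ε > (0 : ℝ), ∃ y : X, ‖y‖ = 1 ∧
    ∀ x ∈ E, (1 - ε) * (‖x‖ + ‖y‖) ≤ ‖x + y‖

lemma l1_norm_eq {X Y : Type*} [NormedAddCommGroup X] [NormedAddCommGroup Y]
    (z : WithLp 1 (X × Y)) : ‖z‖ = ‖z.fst‖ + ‖z.snd‖ := by
  rw [WithLp.prod_norm_eq_add (by norm_num)]
  norm_num

/-- If `X` or `Y` is octahedral, then `X ⊕₁ Y` is octahedral. -/
theorem octahedral_prod_l1 (X Y : Type*)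
    [NormedAddCommGroup X] [NormedSpace ℝ X] [CompleteSpace X]
    [NormedAddCommGroup Y] [NormedSpace ℝ Y] [CompleteSpace Y]
    (h : Octahedral X ∨ Octahedral Y) :
    Octahedral (WithLp 1 (X × Y)) := by
  intro E hE ε hε
  obtain hX | hY := h
  · set f : WithLp 1 (X × Y) →ₗ[ℝ] X :=
      (LinearMap.fst ℝ X Y).comp (WithLp.linearEquiv 1 ℝ (X × Y)).toLinearMap with hf
    haveI : FiniteDimensional ℝ (E.map f) := Module.Finite.map E f
    obtain ⟨y₀, hy₀, hy⟩ := hX (E.map f) this ε hε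
    refine ⟨(WithLp.equiv 1 (X × Y)).symm (y₀, 0), ?_, ?_⟩
    · rw [l1_norm_eq]; simp [hy₀]
    · intro x hx
      have hmem : x.fst ∈ E.map f := ⟨x, hx, rfl⟩
      have h1 := hy x.fst hmem
      have h2 : ‖x + (WithLp.equiv 1 (X × Y)).symm (y₀, 0)‖ = ‖x.fst + y₀‖ + ‖x.snd‖ := by
        rw [l1_norm_eq]; simp
      rw [h2, l1_norm_eq x, l1_norm_eq ((WithLp.equiv 1 (X × Y)).symm (y₀, 0))]
      simp only [hy₀] at h1 ⊢
      have hx2 : (0:ℝ) ≤ ‖x.snd‖ := norm_nonneg _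
      have : ‖((WithLp.equiv 1 (X × Y)).symm (y₀, 0)).fst‖ +
          ‖((WithLp.equiv 1 (X × Y)).symm (y₀, 0)).snd‖ = 1 := by simp [hy₀]
      rw [this]
      nlinarith
  · set f : WithLp 1 (X × Y) →ₗ[ℝ] Y :=
      (LinearMap.snd ℝ X Y).comp (WithLp.linearEquiv 1 ℝ (X × Y)).toLinearMap with hf
    haveI : FiniteDimensional ℝ (E.map f) := Module.Finite.map E f
    obtain ⟨y₀, hy₀, hy⟩ := hY (E.map f) this ε hε
    refine ⟨(WithLp.equiv 1 (X × Y)).symm (0, y₀), ?_, ?_⟩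
    · rw [l1_norm_eq]; simp [hy₀]
    · intro x hx
      have hmem : x.snd ∈ E.map f := ⟨x, hx, rfl⟩
      have h1 := hy x.snd hmem
      have h2 : ‖x + (WithLp.equiv 1 (X × Y)).symm (0, y₀)‖ = ‖x.fst‖ + ‖x.snd + y₀‖ := by
        rw [l1_norm_eq]; simp
      rw [h2, l1_norm_eq x]
      have : ‖((WithLp.equiv 1 (X × Y)).symm (0, y₀))‖ = 1 := by rw [l1_norm_eq]; simp [hy₀]
      rw [this]
      simp only [hy₀] at h1
      have hx1 : (0:ℝ) ≤ ‖x.fst‖ := norm_nonneg _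
      nlinarith
end
end

section
/- Let X and Y be Banach spaces. If X and Y are both δ-average rough for some δ > 0, then X ⊕_∞ Y (the direct sum equipped with the norm ‖(x,y)‖ = max{‖x‖,‖y‖}) is δ-average rough. -/
open Filter Topology

noncomputable section

/-- A Banach space `X` is `δ`-average rough if for every finite family of unit vectors
`x₁, …, xₙ`, one has `limsup_{‖y‖→0} (1/n) ∑ᵢ (‖xᵢ+y‖+‖xᵢ-y‖-2)/‖y‖ ≥ δ`. -/
def AverageRough (X : Type*) [NormedAddCommGroup X] [NormedSpace ℝ X] (δ : ℝ) : Prop :=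
  ∀ n : ℕ, 0 < n → ∀ x : Fin n → X, (∀ i, ‖x i‖ = 1) →
    δ ≤ Filter.limsup
      (fun y : X => (1 / (n : ℝ)) * ∑ i, (‖x i + y‖ + ‖x i - y‖ - 2) / ‖y‖) (𝓝[≠] 0)

/-!
Split the unit vectors `zᵢ = (xᵢ, yᵢ)` of `X ⊕_∞ Y` into those with `‖xᵢ‖ = 1` and the rest, which
have `‖yᵢ‖ = 1`. Roughness of `X` and of `Y` yields `u ∈ X` and `v ∈ Y` along which the average
symmetric slope of the respective group is almost `δ`. Since `(‖x + t u‖ + ‖x - t u‖ - 2) / t` is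
nondecreasing in `t`, `u` and `v` may be taken of the same norm, and then `w = (u, v)` works for all
`zᵢ` at once, because `‖zᵢ ± w‖` dominates both `‖xᵢ ± u‖` and `‖yᵢ ± v‖`.
-/

open Finset

section Norm

variable {E : Type*} [SeminormedAddCommGroup E]

theorem norm_add_add_norm_sub_le (x y : E) : ‖x + y‖ + ‖x - y‖ ≤ 2 * ‖x‖ + 2 * ‖y‖ := by
  linarith [norm_add_le x y, norm_sub_le x y]

theorem frequently_nhdsNE_zero_iff {P : E → Prop} :
    (∃ᶠ y in 𝓝[≠] 0, P y) ↔ ∀ r > 0, ∃ y, y ≠ 0 ∧ ‖y‖ < r ∧ P y := by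
  simp [Metric.nhdsWithin_basis_ball.frequently_iff, and_assoc, and_comm]

variable [NormedSpace ℝ E]

theorem two_mul_norm_le_norm_add_add_norm_sub (x y : E) : 2 * ‖x‖ ≤ ‖x + y‖ + ‖x - y‖ := by
  have : (2 : ℝ) • x = (x + y) + (x - y) := by module
  calc 2 * ‖x‖ = ‖(2 : ℝ) • x‖ := by rw [norm_smul, Real.norm_ofNat]
    _ ≤ ‖x + y‖ + ‖x - y‖ := this ▸ norm_add_le _ _

/-- The symmetric difference quotient `(‖x + u‖ + ‖x - u‖ - 2‖x‖) / ‖u‖` is nondecreasing along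
each ray `u = c • u₀`, by convexity of the norm. -/
theorem mul_norm_add_add_norm_sub_sub_le (x u : E) {c : ℝ} (hc : 1 ≤ c) :
    c * (‖x + u‖ + ‖x - u‖ - 2 * ‖x‖) ≤ ‖x + c • u‖ + ‖x - c • u‖ - 2 * ‖x‖ := by
  have hc0 : 0 ≤ c := zero_le_one.trans hc
  have hscale : ∀ v : E, c * ‖x + v‖ ≤ ‖x + c • v‖ + (c - 1) * ‖x‖ := fun v => by
    have : c • (x + v) = (x + c • v) + (c - 1) • x := by module
    calc c * ‖x + v‖ = ‖c • (x + v)‖ := by rw [norm_smul, Real.norm_of_nonneg hc0]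
      _ ≤ ‖x + c • v‖ + (c - 1) * ‖x‖ := by
        rw [this]
        refine (norm_add_le _ _).trans_eq ?_
        rw [norm_smul, Real.norm_of_nonneg (sub_nonneg.2 hc)]
  have h₁ := hscale u
  have h₂ := hscale (-u)
  rw [← sub_eq_add_neg, smul_neg, ← sub_eq_add_neg] at h₂
  linarith

end Norm

section AverageRough

variable {X : Type*} [NormedAddCommGroup X] {n : ℕ} {x : Fin n → X}

def avgSlope (x : Fin n → X) (y : X) : ℝ :=
  (1 / (n : ℝ)) * ∑ i, (‖x i + y‖ + ‖x i - y‖ - 2) / ‖y‖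

theorem avgSlope_nonneg [NormedSpace ℝ X] (hx : ∀ i, ‖x i‖ = 1) (y : X) : 0 ≤ avgSlope x y := by
  refine mul_nonneg (by positivity) (sum_nonneg fun i _ => div_nonneg ?_ (norm_nonneg y))
  linarith [two_mul_norm_le_norm_add_add_norm_sub (x i) y, hx i]

theorem avgSlope_le_two (hx : ∀ i, ‖x i‖ = 1) (y : X) : avgSlope x y ≤ 2 := by
  have hterm : ∀ i, (‖x i + y‖ + ‖x i - y‖ - 2) / ‖y‖ ≤ 2 := fun i =>
    div_le_of_le_mul₀ (norm_nonneg y) zero_le_two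
      (by linarith [norm_add_add_norm_sub_le (x i) y, hx i])
  calc avgSlope x y ≤ (1 / (n : ℝ)) * ∑ _i : Fin n, 2 :=
        mul_le_mul_of_nonneg_left (sum_le_sum fun i _ => hterm i) (by positivity)
    _ ≤ 2 := by
        rcases n.eq_zero_or_pos with rfl | hn
        · simp
        · simp [field]

theorem le_avgSlope_iff (hn : 0 < n) {y : X} (hy : y ≠ 0) {c : ℝ} :
    c ≤ avgSlope x y ↔ c * n * ‖y‖ ≤ ∑ i, (‖x i + y‖ + ‖x i - y‖ - 2) := by
  have hy' : 0 < ‖y‖ := norm_pos_iff.2 hy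
  rw [avgSlope, ← sum_div, one_div_mul_eq_div, le_div_iff₀ (by positivity), le_div_iff₀ hy',
    mul_comm c]

theorem le_limsup_avgSlope_iff [NormedSpace ℝ X] (hn : 0 < n) (hx : ∀ i, ‖x i‖ = 1) {δ : ℝ} :
    δ ≤ limsup (avgSlope x) (𝓝[≠] 0) ↔ ∀ c < δ, ∃ᶠ y in 𝓝[≠] 0, c ≤ avgSlope x y := by
  have : Nontrivial X := nontrivial_of_ne (x ⟨0, hn⟩) 0 (by simp [← norm_ne_zero_iff, hx])
  rw [le_limsup_iff (isCoboundedUnder_le_of_le _ (avgSlope_nonneg hx))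
    (isBoundedUnder_of ⟨2, avgSlope_le_two hx⟩)]
  refine ⟨fun h c hc => (h c hc).mono fun _ => le_of_lt, fun h c hc => ?_⟩
  obtain ⟨c', hcc', hc'⟩ := exists_between hc
  exact (h c' hc').mono fun _ => hcc'.trans_le

theorem averageRough_iff_frequently [NormedSpace ℝ X] {δ : ℝ} :
    AverageRough X δ ↔ ∀ n : ℕ, 0 < n → ∀ x : Fin n → X, (∀ i, ‖x i‖ = 1) →
      ∀ c < δ, ∃ᶠ y in 𝓝[≠] 0, c ≤ avgSlope x y :=
  forall₂_congr fun _ hn => forall₂_congr fun _ hx => le_limsup_avgSlope_iff hn hx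

variable [NormedSpace ℝ X] {δ : ℝ}

theorem AverageRough.exists_norm_lt_le_sum (hX : AverageRough X δ) {ι : Type*} {s : Finset ι}
    (hs : s.Nonempty) {x : ι → X} (hx : ∀ i ∈ s, ‖x i‖ = 1) {c r : ℝ} (hc : c < δ) (hr : 0 < r) :
    ∃ y : X, y ≠ 0 ∧ ‖y‖ < r ∧ c * #s * ‖y‖ ≤ ∑ i ∈ s, (‖x i + y‖ + ‖x i - y‖ - 2) := by
  have hs' : 0 < #s := hs.card_pos
  set e := s.equivFin
  have hfreq := averageRough_iff_frequently.1 hX #s hs' (fun j => x (e.symm j))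
    (fun j => hx _ (e.symm j).2) c hc
  obtain ⟨y, hy, hyr, hcy⟩ := frequently_nhdsNE_zero_iff.1 hfreq r hr
  refine ⟨y, hy, hyr, ?_⟩
  rw [le_avgSlope_iff hs' hy] at hcy
  rwa [← sum_coe_sort s, ← e.symm.sum_comp]

theorem AverageRough.exists_norm_eq_le_sum (hX : AverageRough X δ) {ι : Type*} {s : Finset ι}
    (hs : s.Nonempty) {x : ι → X} (hx : ∀ i ∈ s, ‖x i‖ = 1) {c t : ℝ} (hc : c < δ) (ht : 0 < t) :
    ∃ y : X, ‖y‖ = t ∧ c * #s * t ≤ ∑ i ∈ s, (‖x i + y‖ + ‖x i - y‖ - 2) := by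
  obtain ⟨y, hy, hyt, hsum⟩ := hX.exists_norm_lt_le_sum hs hx hc ht
  have hy' : 0 < ‖y‖ := norm_pos_iff.2 hy
  set k := t / ‖y‖
  have hk : 1 ≤ k := (one_le_div hy').2 hyt.le
  refine ⟨k • y, ?_, ?_⟩
  · rw [norm_smul, Real.norm_of_nonneg (by positivity), div_mul_cancel₀ _ hy'.ne']
  calc c * #s * t = k * (c * #s * ‖y‖) := by simp only [k]; field_simp
    _ ≤ k * ∑ i ∈ s, (‖x i + y‖ + ‖x i - y‖ - 2) := by gcongr
    _ ≤ ∑ i ∈ s, (‖x i + k • y‖ + ‖x i - k • y‖ - 2) := by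
      rw [mul_sum]
      refine sum_le_sum fun i hi => ?_
      simpa [hx i hi] using mul_norm_add_add_norm_sub_sub_le (x i) y hk

theorem AverageRough.exists_norm_le_le_sum (hX : AverageRough X δ) {ι : Type*} (s : Finset ι)
    {x : ι → X} (hx : ∀ i ∈ s, ‖x i‖ = 1) {c t : ℝ} (hc : c < δ) (ht : 0 < t) :
    ∃ y : X, ‖y‖ ≤ t ∧ (s.Nonempty → ‖y‖ = t) ∧
      c * #s * t ≤ ∑ i ∈ s, (‖x i + y‖ + ‖x i - y‖ - 2) := by
  rcases s.eq_empty_or_nonempty with rfl | hs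
  -- `X` may be the zero space, so for `s = ∅` only `y = 0` is available.
  · exact ⟨0, by simpa using ht.le, by simp, by simp⟩
  · obtain ⟨y, hy, hsum⟩ := hX.exists_norm_eq_le_sum hs hx hc ht
    exact ⟨y, hy.le, fun _ => hy, hsum⟩

end AverageRough

section WithLp

variable {p : ENNReal} [Fact (1 ≤ p)] {α β : Type*} [SeminormedAddCommGroup α]
  [SeminormedAddCommGroup β]

theorem WithLp.norm_fst_add_add_norm_fst_sub_le (z : WithLp p (α × β)) (u : α) (v : β) :
    ‖z.fst + u‖ + ‖z.fst - u‖ ≤ ‖z + toLp p (u, v)‖ + ‖z - toLp p (u, v)‖ := by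
  simpa using
    add_le_add (norm_fst_le (x := z + toLp p (u, v))) (norm_fst_le (x := z - toLp p (u, v)))

theorem WithLp.norm_snd_add_add_norm_snd_sub_le (z : WithLp p (α × β)) (u : α) (v : β) :
    ‖z.snd + v‖ + ‖z.snd - v‖ ≤ ‖z + toLp p (u, v)‖ + ‖z - toLp p (u, v)‖ := by
  simpa using
    add_le_add (norm_snd_le (x := z + toLp p (u, v))) (norm_snd_le (x := z - toLp p (u, v)))

end WithLp

theorem averageRough_prod_linfty_general (X Y : Type*)
    [NormedAddCommGroup X] [NormedSpace ℝ X]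
    [NormedAddCommGroup Y] [NormedSpace ℝ Y]
    (δ : ℝ) (hX : AverageRough X δ) (hY : AverageRough Y δ) :
    AverageRough (WithLp ⊤ (X × Y)) δ := by
  classical
  refine averageRough_iff_frequently.2 fun n hn z hz c hc =>
    frequently_nhdsNE_zero_iff.2 fun r hr => ?_
  set A := univ.filter fun i => ‖(z i).fst‖ = 1
  have hA : ∀ i ∈ A, ‖(z i).fst‖ = 1 := fun i hi => (mem_filter.1 hi).2
  have hB : ∀ i ∈ Aᶜ, ‖(z i).snd‖ = 1 := fun i hi => by
    have hzi := hz i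
    rw [WithLp.prod_norm_eq_sup] at hzi
    simp only [A, mem_compl, mem_filter, mem_univ, true_and] at hi
    rcases max_eq_iff.1 hzi with h | h
    exacts [absurd h.1 hi, h.1]
  obtain ⟨u, hu, hu_eq, hu_sum⟩ := hX.exists_norm_le_le_sum A hA hc (half_pos hr)
  obtain ⟨v, hv, hv_eq, hv_sum⟩ := hY.exists_norm_le_le_sum Aᶜ hB hc (half_pos hr)
  set w := WithLp.toLp ⊤ (u, v)
  have hw : ‖w‖ = r / 2 := by
    rw [WithLp.prod_norm_toLp, Prod.norm_mk]
    refine le_antisymm (max_le hu hv) ?_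
    rcases A.eq_empty_or_nonempty with hA | hA
    · have : Nonempty (Fin n) := ⟨⟨0, hn⟩⟩
      exact (hv_eq (by simp [hA])).ge.trans (le_max_right _ _)
    · exact (hu_eq hA).ge.trans (le_max_left _ _)
  have hw0 : w ≠ 0 := norm_ne_zero_iff.1 (by rw [hw]; positivity)
  refine ⟨w, hw0, by rw [hw]; linarith, ?_⟩
  rw [le_avgSlope_iff hn hw0, hw, ← sum_add_sum_compl A]
  calc c * n * (r / 2) = c * #A * (r / 2) + c * #Aᶜ * (r / 2) := by
        rw [← add_mul, ← mul_add, ← Nat.cast_add, card_add_card_compl, Fintype.card_fin]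
    _ ≤ _ := add_le_add (hu_sum.trans (sum_le_sum fun i _ => ?_))
        (hv_sum.trans (sum_le_sum fun i _ => ?_))
  · linarith [WithLp.norm_fst_add_add_norm_fst_sub_le (z i) u v]
  · linarith [WithLp.norm_snd_add_add_norm_snd_sub_le (z i) u v]

/-- If `X` and `Y` are `δ`-average rough, then `X ⊕_∞ Y` is `δ`-average rough. -/
theorem averageRough_prod_linfty (X Y : Type*)
    [NormedAddCommGroup X] [NormedSpace ℝ X] [CompleteSpace X]
    [NormedAddCommGroup Y] [NormedSpace ℝ Y] [CompleteSpace Y]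
    (δ : ℝ) (hδ : 0 < δ) (hX : AverageRough X δ) (hY : AverageRough Y δ) :
    AverageRough (WithLp ⊤ (X × Y)) δ :=
  averageRough_prod_linfty_general X Y δ hX hY
end
end

section
/- Let X and Y be Banach spaces and 1 < p < ∞. If X and Y are both δ-average rough for some δ > 0, then X ⊕_p Y (the direct sum equipped with the norm ‖(x,y)‖ = (‖x‖^p + ‖y‖^p)^{1/p}) is 2^{−1/p}·δ-average rough. -/
/-!
Write `N(x, u) = ‖x + u‖ + ‖x - u‖ - 2‖x‖`; for a unit vector `x` the roughness quotient is
`N(x, u) / ‖u‖`, and it does not decrease when `u` is scaled up, so a bound attained at arbitrarily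
small `u` is attained on every sphere around `0`.

Let `z = (x, y)` be a unit vector of `X ⊕_p Y`, `a = ‖x‖`, `b = ‖y‖`. Hölder's inequality against
the unit vector `(a^{p-1}, b^{p-1})` of `ℓ^q` gives
`N(z, (u, v)) ≥ a^{p-1} N(x, u) + b^{p-1} N(y, v) ≥ a^p N(x / a, u) + b^p N(y / b, v)`.
Roughness of `X`, applied to families with repetitions that approximate the real weights `a_i^p`,
yields `u` of any prescribed small norm `s` with `∑ a_i^p N(x_i / a_i, u) ≳ δ s ∑ a_i^p`, and
likewise `v` in `Y`. Since `‖(u, v)‖ ≤ 2^{1/p} s` and `∑ (a_i^p + b_i^p) = n`, the average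
roughness quotient at `(u, v)` is at least about `2^{-1/p} δ`.
-/

open Filter Topology ENNReal

noncomputable section

section NormExcess

variable {E : Type*} [NormedAddCommGroup E]

def normExcess (x u : E) : ℝ := ‖x + u‖ + ‖x - u‖ - 2 * ‖x‖

@[simp]
lemma normExcess_zero_right (x : E) : normExcess x 0 = 0 := by
  simp only [normExcess, add_zero, sub_zero]
  ring

lemma normExcess_le_two_mul_norm (x u : E) : normExcess x u ≤ 2 * ‖u‖ := by
  have h₁ := norm_add_le x u
  have h₂ := norm_sub_le x u
  unfold normExcess
  linarith

lemma normExcess_of_norm_eq_one {x : E} (hx : ‖x‖ = 1) (u : E) :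
    ‖x + u‖ + ‖x - u‖ - 2 = normExcess x u := by
  rw [normExcess, hx, mul_one]

variable [NormedSpace ℝ E]

lemma normExcess_nonneg (x u : E) : 0 ≤ normExcess x u := by
  have h := norm_add_le (x + u) (x - u)
  rw [add_add_sub_cancel, ← two_smul ℝ x, norm_smul, Real.norm_two] at h
  unfold normExcess
  linarith

lemma normExcess_le_normExcess_smul {a : ℝ} (ha₀ : 0 ≤ a) (ha₁ : a ≤ 1) (x u : E) :
    normExcess x u ≤ normExcess (a • x) u := by
  have hx : ‖(1 - a) • x‖ = (1 - a) * ‖x‖ := by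
    rw [norm_smul, Real.norm_of_nonneg (by linarith)]
  have h₁ : ‖x + u‖ ≤ ‖a • x + u‖ + (1 - a) * ‖x‖ := by
    rw [← hx, show x + u = (a • x + u) + (1 - a) • x by module]
    exact norm_add_le _ _
  have h₂ : ‖x - u‖ ≤ ‖a • x - u‖ + (1 - a) * ‖x‖ := by
    rw [← hx, show x - u = (a • x - u) + (1 - a) • x by module]
    exact norm_add_le _ _
  rw [normExcess, normExcess, norm_smul, Real.norm_of_nonneg ha₀]
  linarith

lemma normExcess_smul_smul (c : ℝ) (x u : E) :
    normExcess (c • x) (c • u) = |c| * normExcess x u := by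
  simp only [normExcess, ← smul_add, ← smul_sub, norm_smul, Real.norm_eq_abs]
  ring

lemma mul_normExcess_le_normExcess_smul {c : ℝ} (hc : 1 ≤ c) (x u : E) :
    c * normExcess x u ≤ normExcess x (c • u) := by
  have hc₀ : 0 < c := zero_lt_one.trans_le hc
  calc c * normExcess x u ≤ c * normExcess (c⁻¹ • x) u := by
        gcongr
        exact normExcess_le_normExcess_smul (inv_nonneg.2 hc₀.le) (inv_le_one_of_one_le₀ hc) x u
    _ = |c| * normExcess (c⁻¹ • x) u := by rw [abs_of_pos hc₀]
    _ = normExcess x (c • u) := by rw [← normExcess_smul_smul, smul_inv_smul₀ hc₀.ne']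

lemma normExcess_inv_norm_smul_le {x : E} (hx : ‖x‖ ≤ 1) (u : E) :
    normExcess (‖x‖⁻¹ • x) u ≤ normExcess x u := by
  rcases eq_or_ne x 0 with rfl | hx₀
  · simp
  · simpa [smul_inv_smul₀ (norm_ne_zero_iff.2 hx₀)] using
      normExcess_le_normExcess_smul (norm_nonneg x) hx (‖x‖⁻¹ • x) u

lemma rpow_mul_normExcess_inv_norm_smul_le {P : ℝ} (hP : 1 ≤ P) {x : E} (hx : ‖x‖ ≤ 1) (u : E) :
    ‖x‖ ^ P * normExcess (‖x‖⁻¹ • x) u ≤ ‖x‖ ^ (P - 1) * normExcess x u := by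
  calc ‖x‖ ^ P * normExcess (‖x‖⁻¹ • x) u ≤ ‖x‖ ^ (P - 1) * normExcess (‖x‖⁻¹ • x) u :=
        mul_le_mul_of_nonneg_right (Real.rpow_le_rpow_of_exponent_ge' (norm_nonneg x) hx
          (sub_nonneg.2 hP) (sub_le_self P zero_le_one)) (normExcess_nonneg _ _)
    _ ≤ ‖x‖ ^ (P - 1) * normExcess x u := by gcongr; exact normExcess_inv_norm_smul_le hx u

lemma norm_inv_norm_smul_of_rpow_ne_zero {P : ℝ} (hP : P ≠ 0) {x : E} (hx : ‖x‖ ^ P ≠ 0) :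
    ‖‖x‖⁻¹ • x‖ = 1 :=
  norm_smul_inv_norm (𝕜 := ℝ) fun h => hx (by simp [h, hP])

end NormExcess

section Characterization

variable {E : Type*} [NormedAddCommGroup E] [NormedSpace ℝ E]

lemma le_limsup_average_iff {n : ℕ} (hn : 0 < n) {x : Fin n → E} (hx : ∀ i, ‖x i‖ = 1)
    (δ : ℝ) :
    δ ≤ limsup (fun y : E => (1 / (n : ℝ)) * ∑ i, (‖x i + y‖ + ‖x i - y‖ - 2) / ‖y‖)
        (𝓝[≠] 0) ↔
      ∀ t < δ, ∀ r > 0, ∃ y ≠ 0, ‖y‖ < r ∧ t * n * ‖y‖ ≤ ∑ i, normExcess (x i) y := by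
  have : Nontrivial E := ⟨x ⟨0, hn⟩, 0, ne_zero_of_norm_ne_zero (by simp [hx])⟩
  have hn' : (0 : ℝ) < n := Nat.cast_pos.2 hn
  have hF : ∀ y : E, (1 / (n : ℝ)) * ∑ i, (‖x i + y‖ + ‖x i - y‖ - 2) / ‖y‖ =
      (∑ i, normExcess (x i) y) / (n * ‖y‖) := fun y => by
    simp only [normExcess_of_norm_eq_one (hx _), ← Finset.sum_div]
    field_simp
  have hF₀ : ∀ y : E, 0 ≤ (∑ i, normExcess (x i) y) / (n * ‖y‖) := fun y =>
    div_nonneg (Finset.sum_nonneg fun i _ => normExcess_nonneg _ _) (by positivity)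
  have hF₂ : ∀ y : E, (∑ i, normExcess (x i) y) / (n * ‖y‖) ≤ 2 := fun y => by
    refine div_le_of_le_mul₀ (by positivity) zero_le_two ?_
    calc ∑ i, normExcess (x i) y ≤ ∑ _i : Fin n, 2 * ‖y‖ :=
          Finset.sum_le_sum fun i _ => normExcess_le_two_mul_norm _ _
      _ = 2 * (n * ‖y‖) := by
          simp only [Finset.sum_const, Finset.card_univ, Fintype.card_fin, nsmul_eq_mul]; ring
  simp only [hF]
  rw [le_limsup_iff' (isCoboundedUnder_le_of_le _ hF₀) (isBoundedUnder_of ⟨2, hF₂⟩)]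
  refine forall₂_congr fun t _ => ?_
  rw [Metric.nhdsWithin_basis_ball.frequently_iff]
  refine forall₂_congr fun r _ => exists_congr fun y => ?_
  simp only [Set.mem_inter_iff, mem_ball_zero_iff, Set.mem_compl_singleton_iff]
  constructor
  · rintro ⟨⟨hyr, hy⟩, ht⟩
    have : 0 < ‖y‖ := norm_pos_iff.2 hy
    exact ⟨hy, hyr, mul_assoc t n ‖y‖ ▸ (le_div_iff₀ (by positivity)).1 ht⟩
  · rintro ⟨hy, hyr, ht⟩
    have : 0 < ‖y‖ := norm_pos_iff.2 hy
    exact ⟨⟨hyr, hy⟩, (le_div_iff₀ (by positivity)).2 (mul_assoc t n ‖y‖ ▸ ht)⟩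

theorem averageRough_iff {δ : ℝ} :
    AverageRough E δ ↔ ∀ n : ℕ, 0 < n → ∀ x : Fin n → E, (∀ i, ‖x i‖ = 1) →
      ∀ t < δ, ∀ r > 0, ∃ y ≠ 0, ‖y‖ < r ∧ t * n * ‖y‖ ≤ ∑ i, normExcess (x i) y :=
  forall₂_congr fun _ hn => forall₂_congr fun _ hx => le_limsup_average_iff hn hx δ

end Characterization

namespace AverageRough

variable {X : Type*} [NormedAddCommGroup X] [NormedSpace ℝ X] {δ : ℝ} (hX : AverageRough X δ)
  {ι : Type*} [Fintype ι] {t r : ℝ}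
include hX

lemma exists_card_mul_le_sum_normExcess {x : ι → X} (hx : ∀ i, ‖x i‖ = 1) (ht : t < δ)
    (hr : 0 < r) : ∃ u : X, ‖u‖ ≤ r ∧ t * Fintype.card ι * r ≤ ∑ i, normExcess (x i) u := by
  rcases (Fintype.card ι).eq_zero_or_pos with hι | hι
  · exact ⟨0, by simpa using hr.le, by simp [hι]⟩
  set e := (Fintype.equivFin ι).symm
  obtain ⟨y, hy₀, hyr, hy⟩ :=
    averageRough_iff.1 hX _ hι (fun i => x (e i)) (fun i => hx _) t ht r hr
  rw [e.sum_comp (fun i => normExcess (x i) y)] at hy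
  have hy' : 0 < ‖y‖ := norm_pos_iff.2 hy₀
  refine ⟨(r / ‖y‖) • y, by rw [norm_smul, Real.norm_of_nonneg (by positivity),
    div_mul_cancel₀ _ hy'.ne'], ?_⟩
  calc t * Fintype.card ι * r = r / ‖y‖ * (t * Fintype.card ι * ‖y‖) := by field_simp
    _ ≤ r / ‖y‖ * ∑ i, normExcess (x i) y := by gcongr
    _ = ∑ i, r / ‖y‖ * normExcess (x i) y := Finset.mul_sum _ _ _
    _ ≤ ∑ i, normExcess (x i) ((r / ‖y‖) • y) := Finset.sum_le_sum fun i _ =>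
        mul_normExcess_le_normExcess_smul ((one_le_div hy').2 hyr.le) _ _

lemma exists_sum_nat_mul_le_sum_normExcess {x : ι → X} (k : ι → ℕ)
    (hx : ∀ i, k i ≠ 0 → ‖x i‖ = 1) (ht : t < δ) (hr : 0 < r) :
    ∃ u : X, ‖u‖ ≤ r ∧ t * (∑ i, (k i : ℝ)) * r ≤ ∑ i, k i * normExcess (x i) u := by
  obtain ⟨u, hur, hu⟩ := hX.exists_card_mul_le_sum_normExcess
    (x := fun j : Σ i, Fin (k i) => x j.1) (fun j => hx j.1 (Fin.pos j.2).ne') ht hr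
  refine ⟨u, hur, ?_⟩
  simpa [Fintype.card_sigma, Fintype.sum_sigma] using hu

lemma exists_sum_mul_le_sum_normExcess {x : ι → X} {c : ι → ℝ} (hc : ∀ i, 0 ≤ c i)
    (hx : ∀ i, c i ≠ 0 → ‖x i‖ = 1) (ht₀ : 0 ≤ t) (ht : t < δ) (hr : 0 < r) {η : ℝ}
    (hη : 0 < η) :
    ∃ u : X, ‖u‖ ≤ r ∧ r * (t * ∑ i, c i - η) ≤ ∑ i, c i * normExcess (x i) u := by
  obtain ⟨M, hM⟩ := exists_nat_gt (t * Fintype.card ι / η)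
  have hM₀ : (0 : ℝ) < M := lt_of_le_of_lt (by positivity) hM
  set k : ι → ℕ := fun i => ⌊c i * M⌋₊
  have hk_le : ∀ i, (k i : ℝ) ≤ c i * M := fun i => Nat.floor_le (mul_nonneg (hc i) hM₀.le)
  have hk_gt : ∀ i, c i * M - 1 ≤ k i := fun i => by
    linarith [Nat.lt_floor_add_one (c i * M)]
  have hkx : ∀ i, k i ≠ 0 → ‖x i‖ = 1 := fun i hki =>
    hx i fun hci => hki (by simp [k, hci])
  obtain ⟨u, hur, hu⟩ := hX.exists_sum_nat_mul_le_sum_normExcess k hkx ht hr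
  refine ⟨u, hur, ?_⟩
  have hη' : t * Fintype.card ι / M ≤ η := by
    rw [div_lt_iff₀ hη] at hM
    rw [div_le_iff₀ hM₀]
    linarith
  calc r * (t * ∑ i, c i - η) ≤ r * (t * ∑ i, c i - t * Fintype.card ι / M) := by gcongr
    _ = r * t * (∑ i, (c i * M - 1)) / M := by
        rw [Finset.sum_sub_distrib, ← Finset.sum_mul]
        simp only [Finset.sum_const, Finset.card_univ, nsmul_eq_mul, mul_one]
        field_simp
    _ ≤ r * t * (∑ i, (k i : ℝ)) / M := by gcongr with i; exact hk_gt i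
    _ ≤ (∑ i, k i * normExcess (x i) u) / M := by gcongr; linarith only [hu]
    _ = ∑ i, k i / M * normExcess (x i) u := by
        rw [Finset.sum_div]
        exact Finset.sum_congr rfl fun i _ => by ring
    _ ≤ ∑ i, c i * normExcess (x i) u := Finset.sum_le_sum fun i _ => by
        gcongr
        · exact normExcess_nonneg _ _
        · exact (div_le_iff₀ hM₀).2 (hk_le i)

end AverageRough

lemma rpow_sub_one_mul_add_le {P : ℝ} (hP : 1 < P) {a b s t : ℝ} (ha : 0 ≤ a) (hb : 0 ≤ b)
    (hs : 0 ≤ s) (ht : 0 ≤ t) (hab : a ^ P + b ^ P = 1) :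
    a ^ (P - 1) * s + b ^ (P - 1) * t ≤ (s ^ P + t ^ P) ^ (1 / P) := by
  have hPQ : (P - 1) * (P / (P - 1)) = P := by field_simp [(sub_pos.2 hP).ne']
  have key := Real.inner_le_Lp_mul_Lq_of_nonneg (s := Finset.univ)
    (f := ![a ^ (P - 1), b ^ (P - 1)]) (g := ![s, t]) (Real.HolderConjugate.conjExponent hP).symm
    (by intro i _; fin_cases i <;> simp <;> positivity)
    (by intro i _; fin_cases i <;> simpa)
  simp only [Fin.sum_univ_two, Matrix.cons_val_zero, Matrix.cons_val_one] at key
  rwa [← Real.rpow_mul ha, ← Real.rpow_mul hb, Real.conjExponent, hPQ, hab, Real.one_rpow,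
    one_mul] at key

namespace WithLp

variable {X Y : Type*} [NormedAddCommGroup X] [NormedAddCommGroup Y] {p : ℝ≥0∞}

lemma prod_norm_rpow_eq_add (hp : 0 < p.toReal) (z : WithLp p (X × Y)) :
    ‖z.fst‖ ^ p.toReal + ‖z.snd‖ ^ p.toReal = ‖z‖ ^ p.toReal := by
  rw [prod_norm_eq_add hp, ← Real.rpow_mul (by positivity), one_div_mul_cancel hp.ne',
    Real.rpow_one]

lemma prod_norm_toLp_le (hp : 0 < p.toReal) {u : X} {v : Y} {s : ℝ} (hu : ‖u‖ ≤ s)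
    (hv : ‖v‖ ≤ s) : ‖toLp p (u, v)‖ ≤ 2 ^ (1 / p.toReal) * s := by
  have hs : 0 ≤ s := (norm_nonneg u).trans hu
  have hu' := Real.rpow_le_rpow (norm_nonneg u) hu hp.le
  have hv' := Real.rpow_le_rpow (norm_nonneg v) hv hp.le
  calc ‖toLp p (u, v)‖ = (‖u‖ ^ p.toReal + ‖v‖ ^ p.toReal) ^ (1 / p.toReal) :=
        prod_norm_eq_add hp _
    _ ≤ (2 * s ^ p.toReal) ^ (1 / p.toReal) := by gcongr; linarith
    _ = 2 ^ (1 / p.toReal) * s := by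
        rw [Real.mul_rpow zero_le_two (by positivity), ← Real.rpow_mul hs,
          mul_one_div_cancel hp.ne', Real.rpow_one]

variable [Fact (1 ≤ p)]

lemma rpow_sub_one_mul_normExcess_add_le (hP : 1 < p.toReal) {z : WithLp p (X × Y)}
    (hz : ‖z‖ = 1) (w : WithLp p (X × Y)) :
    ‖z.fst‖ ^ (p.toReal - 1) * normExcess z.fst w.fst
      + ‖z.snd‖ ^ (p.toReal - 1) * normExcess z.snd w.snd ≤ normExcess z w := by
  have hp : 0 < p.toReal := zero_lt_one.trans hP
  have hab : ‖z.fst‖ ^ p.toReal + ‖z.snd‖ ^ p.toReal = 1 := by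
    rw [prod_norm_rpow_eq_add hp, hz, Real.one_rpow]
  have hself : ∀ a : ℝ, 0 ≤ a → a ^ (p.toReal - 1) * a = a ^ p.toReal := fun a ha => by
    rw [← Real.rpow_add_one' ha (by linarith), sub_add_cancel]
  have holder : ∀ w' : WithLp p (X × Y), ‖z.fst‖ ^ (p.toReal - 1) * ‖w'.fst‖
      + ‖z.snd‖ ^ (p.toReal - 1) * ‖w'.snd‖ ≤ ‖w'‖ := fun w' => by
    rw [prod_norm_eq_add hp w']
    exact rpow_sub_one_mul_add_le hP (norm_nonneg _) (norm_nonneg _) (norm_nonneg _)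
      (norm_nonneg _) hab
  have hplus := holder (z + w)
  have hminus := holder (z - w)
  simp only [add_fst, add_snd, sub_fst, sub_snd] at hplus hminus
  have hfst := hself _ (norm_nonneg z.fst)
  have hsnd := hself _ (norm_nonneg z.snd)
  simp only [normExcess, hz]
  linear_combination hplus + hminus - 2 * hfst - 2 * hsnd - 2 * hab

variable [NormedSpace ℝ X] [NormedSpace ℝ Y]

lemma rpow_mul_normExcess_inv_norm_smul_add_le (hP : 1 < p.toReal) {z : WithLp p (X × Y)}
    (hz : ‖z‖ = 1) (w : WithLp p (X × Y)) :
    ‖z.fst‖ ^ p.toReal * normExcess (‖z.fst‖⁻¹ • z.fst) w.fst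
      + ‖z.snd‖ ^ p.toReal * normExcess (‖z.snd‖⁻¹ • z.snd) w.snd ≤ normExcess z w :=
  (add_le_add
    (rpow_mul_normExcess_inv_norm_smul_le hP.le ((norm_fst_le X z).trans hz.le) w.fst)
    (rpow_mul_normExcess_inv_norm_smul_le hP.le ((norm_snd_le X z).trans hz.le) w.snd)).trans
    (rpow_sub_one_mul_normExcess_add_le hP hz w)

end WithLp

lemma AverageRough.exists_mul_le_sum_normExcess_prod {X Y : Type*} [NormedAddCommGroup X]
    [NormedSpace ℝ X] [NormedAddCommGroup Y] [NormedSpace ℝ Y] {p : ℝ≥0∞} [Fact (1 ≤ p)]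
    (hP : 1 < p.toReal) {δ : ℝ} (hX : AverageRough X δ) (hY : AverageRough Y δ) {n : ℕ} (hn : 0 < n)
    {z : Fin n → WithLp p (X × Y)} (hz : ∀ i, ‖z i‖ = 1) {τ : ℝ} (hτ₀ : 0 < τ) (hτ : τ < δ)
    {s : ℝ} (hs : 0 < s) :
    ∃ w ≠ 0, ‖w‖ ≤ 2 ^ (1 / p.toReal) * s ∧ τ * n * s ≤ ∑ i, normExcess (z i) w := by
  have hp : 0 < p.toReal := zero_lt_one.trans hP
  have hn' : (0 : ℝ) < n := Nat.cast_pos.2 hn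
  have hη : 0 < n * (δ - τ) / 4 := by positivity
  obtain ⟨u, hu, hA⟩ := hX.exists_sum_mul_le_sum_normExcess
    (x := fun i => ‖(z i).fst‖⁻¹ • (z i).fst) (c := fun i => ‖(z i).fst‖ ^ p.toReal)
    (fun i => by positivity) (fun i => norm_inv_norm_smul_of_rpow_ne_zero hp.ne')
    (t := (τ + δ) / 2) (by linarith) (by linarith) hs hη
  obtain ⟨v, hv, hB⟩ := hY.exists_sum_mul_le_sum_normExcess
    (x := fun i => ‖(z i).snd‖⁻¹ • (z i).snd) (c := fun i => ‖(z i).snd‖ ^ p.toReal)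
    (fun i => by positivity) (fun i => norm_inv_norm_smul_of_rpow_ne_zero hp.ne')
    (t := (τ + δ) / 2) (by linarith) (by linarith) hs hη
  set w : WithLp p (X × Y) := WithLp.toLp p (u, v)
  have hweights : ∑ i, ‖(z i).fst‖ ^ p.toReal + ∑ i, ‖(z i).snd‖ ^ p.toReal = n := by
    simp [← Finset.sum_add_distrib, WithLp.prod_norm_rpow_eq_add hp, hz]
  have hbound : τ * n * s ≤ ∑ i, normExcess (z i) w := by
    calc τ * n * s = s * ((τ + δ) / 2 * ∑ i, ‖(z i).fst‖ ^ p.toReal - n * (δ - τ) / 4)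
          + s * ((τ + δ) / 2 * ∑ i, ‖(z i).snd‖ ^ p.toReal - n * (δ - τ) / 4) := by
          linear_combination (-(s * (τ + δ) / 2)) * hweights
      _ ≤ _ := add_le_add hA hB
      _ ≤ ∑ i, normExcess (z i) w := by
          rw [← Finset.sum_add_distrib]
          exact Finset.sum_le_sum fun i _ =>
            WithLp.rpow_mul_normExcess_inv_norm_smul_add_le hP (hz i) w
  refine ⟨w, fun hw => ?_, WithLp.prod_norm_toLp_le hp hu hv, hbound⟩
  have : τ * n * s ≤ 0 := by simpa [hw] using hbound
  exact this.not_gt (by positivity)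

theorem averageRough_prod_lp_general (X Y : Type*)
    [NormedAddCommGroup X] [NormedSpace ℝ X]
    [NormedAddCommGroup Y] [NormedSpace ℝ Y]
    (p : ℝ≥0∞) [Fact (1 ≤ p)] (hp : 1 < p) (hp' : p ≠ ⊤)
    (δ : ℝ) (hδ : 0 < δ) (hX : AverageRough X δ) (hY : AverageRough Y δ) :
    AverageRough (WithLp p (X × Y)) ((2 : ℝ) ^ (-(1 : ℝ) / p.toReal) * δ) := by
  have hP : 1 < p.toReal := by simpa using (ENNReal.toReal_lt_toReal one_ne_top hp').2 hp
  set κ : ℝ := 2 ^ (1 / p.toReal)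
  have hκ : 0 < κ := by positivity
  have hκ' : (2 : ℝ) ^ (-(1 : ℝ) / p.toReal) = κ⁻¹ := by rw [neg_div, Real.rpow_neg zero_le_two]
  rw [averageRough_iff]
  intro n hn z hz t ht r hr
  rw [hκ', inv_mul_eq_div, lt_div_iff₀ hκ] at ht
  obtain ⟨τ, hτ, hτδ⟩ := exists_between (max_lt ht hδ)
  have hτ₀ : 0 < τ := (le_max_right _ _).trans_lt hτ
  obtain ⟨w, hw₀, hwr, hw⟩ :=
    hX.exists_mul_le_sum_normExcess_prod hP hY hn hz hτ₀ hτδ (s := r / (2 * κ)) (by positivity)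
  have hκr : κ * (r / (2 * κ)) = r / 2 := by field_simp
  refine ⟨w, hw₀, by linarith, ?_⟩
  have htτ : t ≤ τ / κ := (le_div_iff₀ hκ).2 ((le_max_left _ _).trans hτ.le)
  calc t * n * ‖w‖ ≤ τ / κ * n * (κ * (r / (2 * κ))) := by gcongr
    _ = τ * n * (r / (2 * κ)) := by field_simp
    _ ≤ ∑ i, normExcess (z i) w := hw

/-- If `X` and `Y` are `δ`-average rough and `1 < p < ∞`, then `X ⊕_p Y` is
`2^{-1/p}·δ`-average rough. -/
theorem averageRough_prod_lp (X Y : Type*)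
    [NormedAddCommGroup X] [NormedSpace ℝ X] [CompleteSpace X]
    [NormedAddCommGroup Y] [NormedSpace ℝ Y] [CompleteSpace Y]
    (p : ℝ≥0∞) [Fact (1 ≤ p)] (hp : 1 < p) (hp' : p ≠ ⊤)
    (δ : ℝ) (hδ : 0 < δ) (hX : AverageRough X δ) (hY : AverageRough Y δ) :
    AverageRough (WithLp p (X × Y)) ((2 : ℝ) ^ (-(1 : ℝ) / p.toReal) * δ) :=
  averageRough_prod_lp_general X Y p hp hp' δ hδ hX hY
end
end

section
/- Let X and Y be octahedral Banach spaces and 1 < p < ∞. Then X ⊕_p Y (the direct sum equipped with the norm ‖(x,y)‖ = (‖x‖^p + ‖y‖^p)^{1/p}) is 2^{1−1/p}-average rough. -/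
/-!
Octahedrality of `X` and `Y` yields unit vectors `a ∈ X`, `b ∈ Y` that are almost `ℓ¹`-orthogonal
to the first, resp. second, components of the given unit vectors `xᵢ`:
`‖u ± t a‖ ≥ (1 - ε) (‖u‖ + t)`. For `w = (t a, t b)` both components of `xᵢ ± w` thus gain
almost `t` in norm, and since the components of a unit vector have norm at most `1`, this forces
`‖xᵢ ± w‖ ≥ (1 - ε) (1 + t)`. As `‖w‖ = 2^{1/p} t`, the difference quotients are at least
`(2t - O(ε)) / (2^{1/p} t)`, which tends to `2^{1 - 1/p}` when `ε = o(t)`.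
-/

open Filter Topology ENNReal

noncomputable section

section AverageRough

variable {X : Type*} [NormedAddCommGroup X]

lemma norm_add_add_norm_sub_sub_two_div_norm_le_two {x : X} (hx : ‖x‖ = 1) (y : X) :
    (‖x + y‖ + ‖x - y‖ - 2) / ‖y‖ ≤ 2 := by
  rcases eq_or_ne y 0 with rfl | hy
  · simp
  rw [div_le_iff₀ (norm_pos_iff.mpr hy)]
  linarith [norm_add_le x y, norm_sub_le x y]

lemma le_limsup_average_of_forall_exists {n : ℕ} (hn : 0 < n) {x : Fin n → X}
    (hx : ∀ i, ‖x i‖ = 1) {δ : ℝ}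
    (h : ∀ η > 0, ∀ r > 0, ∃ w : X, w ≠ 0 ∧ ‖w‖ < r ∧
      ∀ i, δ - η ≤ (‖x i + w‖ + ‖x i - w‖ - 2) / ‖w‖) :
    δ ≤ limsup (fun y : X => (1 / (n : ℝ)) * ∑ i, (‖x i + y‖ + ‖x i - y‖ - 2) / ‖y‖)
      (𝓝[≠] 0) := by
  have hn' : (0 : ℝ) < n := Nat.cast_pos.mpr hn
  have average_const (c : ℝ) : (1 / (n : ℝ)) * ∑ _i : Fin n, c = c := by
    rw [Finset.sum_const, Finset.card_univ, Fintype.card_fin, nsmul_eq_mul]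
    field_simp
  have hbdd : IsBoundedUnder (· ≤ ·) (𝓝[≠] (0 : X))
      (fun y => (1 / (n : ℝ)) * ∑ i, (‖x i + y‖ + ‖x i - y‖ - 2) / ‖y‖) :=
    isBoundedUnder_of ⟨2, fun y => (mul_le_mul_of_nonneg_left
      (Finset.sum_le_sum fun i _ => norm_add_add_norm_sub_sub_two_div_norm_le_two (hx i) y)
      (by positivity)).trans_eq (average_const 2)⟩
  refine le_of_forall_sub_le fun η hη => le_limsup_of_frequently_le ?_ hbdd
  rw [Metric.nhdsWithin_basis_ball.frequently_iff]
  intro r hr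
  obtain ⟨w, hw0, hwr, hw⟩ := h η hη r hr
  refine ⟨w, ⟨mem_ball_zero_iff.mpr hwr, hw0⟩, ?_⟩
  calc δ - η = (1 / (n : ℝ)) * ∑ _i : Fin n, (δ - η) := (average_const _).symm
    _ ≤ _ := mul_le_mul_of_nonneg_left (Finset.sum_le_sum fun i _ => hw i) (by positivity)

end AverageRough

section Octahedral

variable {X : Type*} [NormedAddCommGroup X] [NormedSpace ℝ X]

lemma le_norm_add_smul_of_forall_mem {E : Submodule ℝ X} {a : X} {ε : ℝ}
    (ha : ∀ x ∈ E, (1 - ε) * (‖x‖ + ‖a‖) ≤ ‖x + a‖) {x : X} (hx : x ∈ E) {t : ℝ}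
    (ht : 0 < t) : (1 - ε) * (‖x‖ + t * ‖a‖) ≤ ‖x + t • a‖ := by
  have hscale : x + t • a = t • (t⁻¹ • x + a) := by
    rw [smul_add, smul_smul, mul_inv_cancel₀ ht.ne', one_smul]
  have h := mul_le_mul_of_nonneg_left (ha _ (E.smul_mem t⁻¹ hx)) ht.le
  rw [norm_smul, Real.norm_of_nonneg (inv_nonneg.mpr ht.le)] at h
  rw [hscale, norm_smul, Real.norm_of_nonneg ht.le]
  calc (1 - ε) * (‖x‖ + t * ‖a‖) = t * ((1 - ε) * (t⁻¹ * ‖x‖ + ‖a‖)) := by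
        field_simp
    _ ≤ _ := h

lemma Octahedral.exists_forall_le_norm_add_smul (hX : Octahedral X) {ι : Type*} [Finite ι]
    (u : ι → X) {ε : ℝ} (hε : 0 < ε) :
    ∃ a : X, ‖a‖ = 1 ∧ ∀ i, ∀ t > 0,
      (1 - ε) * (‖u i‖ + t) ≤ ‖u i + t • a‖ ∧ (1 - ε) * (‖u i‖ + t) ≤ ‖u i - t • a‖ := by
  obtain ⟨a, ha1, ha⟩ := hX (Submodule.span ℝ (Set.range u))
    (FiniteDimensional.span_of_finite ℝ (Set.finite_range u)) ε hε
  have hu i : u i ∈ Submodule.span ℝ (Set.range u) := Submodule.subset_span ⟨i, rfl⟩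
  refine ⟨a, ha1, fun i t ht => ⟨?_, ?_⟩⟩
  · simpa [ha1] using le_norm_add_smul_of_forall_mem ha (hu i) ht
  · have h := le_norm_add_smul_of_forall_mem ha (Submodule.neg_mem _ (hu i)) ht
    rwa [ha1, mul_one, norm_neg, neg_add_eq_sub, norm_sub_rev] at h

end Octahedral

namespace WithLp

variable {p : ℝ≥0∞} {α β : Type*} [SeminormedAddCommGroup α] [SeminormedAddCommGroup β]

lemma prod_norm_toLp_of_norm_eq (hp : 0 < p.toReal) {a : α} {b : β} {s : ℝ} (hs : 0 ≤ s)
    (ha : ‖a‖ = s) (hb : ‖b‖ = s) : ‖toLp p (a, b)‖ = 2 ^ (1 / p.toReal) * s := by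
  rw [prod_norm_eq_add hp]
  change (‖a‖ ^ p.toReal + ‖b‖ ^ p.toReal) ^ (1 / p.toReal) = _
  rw [ha, hb, ← two_mul, Real.mul_rpow zero_le_two (Real.rpow_nonneg hs _),
    one_div, Real.rpow_rpow_inv hs hp.ne']

variable [Fact (1 ≤ p)]

lemma prod_norm_le_prod_norm {x z : WithLp p (α × β)} (h₁ : ‖x.fst‖ ≤ ‖z.fst‖)
    (h₂ : ‖x.snd‖ ≤ ‖z.snd‖) : ‖x‖ ≤ ‖z‖ := by
  rcases p.dichotomy with rfl | hp
  · rw [prod_norm_eq_sup, prod_norm_eq_sup]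
    exact sup_le_sup h₁ h₂
  · have hp₀ : 0 < p.toReal := by linarith
    rw [prod_norm_eq_add hp₀, prod_norm_eq_add hp₀]
    gcongr

variable [NormedSpace ℝ α] [NormedSpace ℝ β]

lemma prod_mul_one_add_le_norm {x z : WithLp p (α × β)} (hx : ‖x‖ = 1) {c t : ℝ} (ht : 0 ≤ t)
    (h₁ : c * (‖x.fst‖ + t) ≤ ‖z.fst‖) (h₂ : c * (‖x.snd‖ + t) ≤ ‖z.snd‖) :
    c * (1 + t) ≤ ‖z‖ := by
  rcases lt_or_ge c 0 with hc | hc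
  · nlinarith [norm_nonneg z]
  have hcomp {s : ℝ} (hs : 0 ≤ s) (hs1 : s ≤ 1) : c * (1 + t) * s ≤ c * (s + t) := by
    nlinarith [mul_nonneg hc (mul_nonneg ht (sub_nonneg.mpr hs1))]
  have hx₁ : ‖x.fst‖ ≤ 1 := hx ▸ norm_fst_le _ x
  have hx₂ : ‖x.snd‖ ≤ 1 := hx ▸ norm_snd_le _ x
  -- Since `‖x.fst‖, ‖x.snd‖ ≤ 1`, `z` dominates `(c * (1 + t)) • x` componentwise.
  calc c * (1 + t) = ‖(c * (1 + t)) • x‖ := by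
        rw [norm_smul, hx, mul_one, Real.norm_of_nonneg (by positivity)]
    _ ≤ ‖z‖ := by
        refine prod_norm_le_prod_norm ?_ ?_
        · rw [smul_fst, norm_smul, Real.norm_of_nonneg (by positivity)]
          exact (hcomp (norm_nonneg _) hx₁).trans h₁
        · rw [smul_snd, norm_smul, Real.norm_of_nonneg (by positivity)]
          exact (hcomp (norm_nonneg _) hx₂).trans h₂

lemma prod_le_norm_add_add_norm_sub_sub_two_div_norm (hp : 0 < p.toReal)
    {x : WithLp p (α × β)} (hx : ‖x‖ = 1) {a : α} {b : β} (ha : ‖a‖ = 1) (hb : ‖b‖ = 1)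
    {ε t : ℝ} (ht : 0 < t)
    (hxa : (1 - ε) * (‖x.fst‖ + t) ≤ ‖x.fst + t • a‖ ∧ (1 - ε) * (‖x.fst‖ + t) ≤ ‖x.fst - t • a‖)
    (hxb : (1 - ε) * (‖x.snd‖ + t) ≤ ‖x.snd + t • b‖ ∧ (1 - ε) * (‖x.snd‖ + t) ≤ ‖x.snd - t • b‖) :
    (2 * t - 2 * ε * (1 + t)) / (2 ^ (1 / p.toReal) * t) ≤
      (‖x + toLp p (t • a, t • b)‖ + ‖x - toLp p (t • a, t • b)‖ - 2) /
        ‖toLp p (t • a, t • b)‖ := by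
  have hw : ‖toLp p (t • a, t • b)‖ = 2 ^ (1 / p.toReal) * t :=
    prod_norm_toLp_of_norm_eq hp ht.le (by rw [norm_smul, ha, mul_one, Real.norm_of_nonneg ht.le])
      (by rw [norm_smul, hb, mul_one, Real.norm_of_nonneg ht.le])
  have h_add := prod_mul_one_add_le_norm hx ht.le (z := x + toLp p (t • a, t • b)) hxa.1 hxb.1
  have h_sub := prod_mul_one_add_le_norm hx ht.le (z := x - toLp p (t • a, t • b)) hxa.2 hxb.2
  rw [hw]
  exact div_le_div_of_nonneg_right (by linarith) (by positivity)

end WithLp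

theorem averageRough_prod_lp_of_octahedral_general (X Y : Type*)
    [NormedAddCommGroup X] [NormedSpace ℝ X]
    [NormedAddCommGroup Y] [NormedSpace ℝ Y]
    (p : ℝ≥0∞) [Fact (1 ≤ p)] (hp : 1 < p) (hp' : p ≠ ⊤)
    (hX : Octahedral X) (hY : Octahedral Y) :
    AverageRough (WithLp p (X × Y)) ((2 : ℝ) ^ ((1 : ℝ) - 1 / p.toReal)) := by
  have hp₀ : 0 < p.toReal := ENNReal.toReal_pos (zero_lt_one.trans hp).ne' hp'
  set s : ℝ := 2 ^ (1 / p.toReal) with hs_def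
  have hs : 0 < s := by positivity
  intro n hn x hx
  refine le_limsup_average_of_forall_exists hn hx fun η hη r hr => ?_
  set t := r / (2 * s)
  have ht : 0 < t := by positivity
  -- chosen so that the estimate of `prod_le_norm_add_add_norm_sub_sub_two_div_norm` is exact
  set ε := η * s * t / (2 * (1 + t))
  have hε : 0 < ε := by positivity
  obtain ⟨a, ha, hax⟩ := hX.exists_forall_le_norm_add_smul (fun i => (x i).fst) hε
  obtain ⟨b, hb, hby⟩ := hY.exists_forall_le_norm_add_smul (fun i => (x i).snd) hε
  have hw : ‖WithLp.toLp p (t • a, t • b)‖ = r / 2 := by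
    rw [WithLp.prod_norm_toLp_of_norm_eq hp₀ ht.le (by simp [norm_smul, ha, ht.le])
      (by simp [norm_smul, hb, ht.le]), ← hs_def]
    simp only [t]
    field_simp
  refine ⟨_, norm_pos_iff.mp (hw ▸ half_pos hr), hw ▸ half_lt_self hr, fun i => ?_⟩
  refine le_of_eq_of_le ?_ (WithLp.prod_le_norm_add_add_norm_sub_sub_two_div_norm hp₀ (hx i) ha hb
    ht (hax i t ht) (hby i t ht))
  rw [Real.rpow_sub two_pos, Real.rpow_one, ← hs_def]
  simp only [ε]
  field_simp

/-- If `X` and `Y` are octahedral and `1 < p < ∞`, then `X ⊕_p Y` is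
`2^{1-1/p}`-average rough. -/
theorem averageRough_prod_lp_of_octahedral (X Y : Type*)
    [NormedAddCommGroup X] [NormedSpace ℝ X] [CompleteSpace X]
    [NormedAddCommGroup Y] [NormedSpace ℝ Y] [CompleteSpace Y]
    (p : ℝ≥0∞) [Fact (1 ≤ p)] (hp : 1 < p) (hp' : p ≠ ⊤)
    (hX : Octahedral X) (hY : Octahedral Y) :
    AverageRough (WithLp p (X × Y)) ((2 : ℝ) ^ ((1 : ℝ) - 1 / p.toReal)) :=
  averageRough_prod_lp_of_octahedral_general X Y p hp hp' hX hY
end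
end

section
/- Let X and Y be nontrivial Banach spaces and 1 < p < ∞. Then X ⊕_p Y (the direct sum equipped with the norm ‖(x,y)‖ = (‖x‖^p + ‖y‖^p)^{1/p}) is not δ-average rough for any δ > 2^{1−1/p}. -/
open Filter Topology ENNReal

noncomputable section

private lemma bernoulli_rpow_aux {q s t : ℝ} (hq : 1 < q) (hs : 1/2 ≤ s) (ht : 0 ≤ t) :
    (s ^ q + t ^ q) ^ (1/q) ≤ s + 2 ^ (q - 1) / q * t ^ q := by
  have hq0 : (0:ℝ) < q := lt_trans one_pos hq
  have hs0 : (0:ℝ) < s := lt_of_lt_of_le (by norm_num) hs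
  set ε : ℝ := 2 ^ (q - 1) / q * t ^ q with hεdef
  have hε : 0 ≤ ε := by positivity
  have hmain : s ^ q + t ^ q ≤ (s + ε) ^ q := by
    have hfac : s + ε = s * (1 + ε / s) := by field_simp
    have hbern : 1 + q * (ε / s) ≤ (1 + ε / s) ^ q :=
      one_add_mul_self_le_rpow_one_add
        (le_trans (by norm_num : (-1:ℝ) ≤ 0) (by positivity)) hq.le
    have h2s : ((2:ℝ)*s) ^ (q-1) = 2 ^ (q-1) * s ^ (q-1) :=
      Real.mul_rpow (by norm_num) hs0.le
    have hsq : s ^ (q-1) = s ^ q / s := by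
      rw [Real.rpow_sub hs0, Real.rpow_one]
    calc s ^ q + t ^ q ≤ s ^ q + (2*s) ^ (q-1) * t ^ q := by
          have h1 : (1:ℝ) ≤ (2*s) ^ (q-1) :=
            Real.one_le_rpow (by linarith) (by linarith)
          exact add_le_add le_rfl (le_mul_of_one_le_left (Real.rpow_nonneg ht q) h1)
      _ = s ^ q * (1 + q * (ε / s)) := by
          rw [h2s, hsq, hεdef]
          field_simp
      _ ≤ s ^ q * (1 + ε / s) ^ q :=
          mul_le_mul_of_nonneg_left hbern (Real.rpow_nonneg hs0.le q)
      _ = (s + ε) ^ q := by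
          rw [hfac, Real.mul_rpow hs0.le (by positivity)]
  have h3 := Real.rpow_le_rpow (by positivity) hmain (by positivity : (0:ℝ) ≤ 1/q)
  rw [one_div, Real.rpow_rpow_inv (by positivity) hq0.ne'] at h3
  rw [one_div]
  exact h3

private lemma mean2_aux {q A B : ℝ} (hq : 1 < q) (hA : 0 ≤ A) (hB : 0 ≤ B) :
    A + B ≤ 2 ^ (1 - 1/q) * (A ^ q + B ^ q) ^ (1/q) := by
  have hq0 : (0:ℝ) < q := lt_trans one_pos hq
  have h' : (A + B) ^ q ≤ 2 ^ (q - 1) * (A ^ q + B ^ q) := by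
    have h := NNReal.rpow_add_le_mul_rpow_add_rpow A.toNNReal B.toNNReal hq.le
    have h2 := (NNReal.coe_le_coe).2 h
    push_cast at h2
    rwa [Real.coe_toNNReal _ hA, Real.coe_toNNReal _ hB] at h2
  have h2 := Real.rpow_le_rpow (by positivity) h' (by positivity : (0:ℝ) ≤ 1/q)
  rw [one_div, Real.rpow_rpow_inv (by positivity) hq0.ne'] at h2
  calc A + B ≤ (2 ^ (q-1) * (A^q + B^q)) ^ q⁻¹ := h2
    _ = 2 ^ (1 - 1/q) * (A^q+B^q)^(1/q) := by
        rw [Real.mul_rpow (by positivity) (by positivity),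
          ← Real.rpow_mul (by norm_num : (0:ℝ) ≤ 2), one_div]
        congr 1
        field_simp

/-- For nontrivial `X`, `Y` and `1 < p < ∞`, the space `X ⊕_p Y` is not `δ`-average
rough for any `δ > 2^{1-1/p}`. -/
theorem not_averageRough_prod_lp (X Y : Type*)
    [NormedAddCommGroup X] [NormedSpace ℝ X] [CompleteSpace X] [Nontrivial X]
    [NormedAddCommGroup Y] [NormedSpace ℝ Y] [CompleteSpace Y] [Nontrivial Y]
    (p : ℝ≥0∞) [Fact (1 ≤ p)] (hp : 1 < p) (hp' : p ≠ ⊤)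
    (δ : ℝ) (hδ : (2 : ℝ) ^ ((1 : ℝ) - 1 / p.toReal) < δ) :
    ¬ AverageRough (WithLp p (X × Y)) δ := by
  intro h
  set q : ℝ := p.toReal with hqdef
  have hq : 1 < q := by
    rw [hqdef, ← ENNReal.toReal_one]
    exact (ENNReal.toReal_lt_toReal (by simp) hp').mpr hp
  have hq0 : (0:ℝ) < q := lt_trans one_pos hq
  have hq0' : 0 < p.toReal := hq0
  set c : ℝ := (2 : ℝ) ^ ((1 : ℝ) - 1 / q) with hcdef
  have hc : 0 < c := by positivity
  set C : ℝ := 2 ^ (q - 1) / q with hCdef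
  have hC : 0 < C := by positivity
  set η : ℝ := (δ - c) / 2 with hηdef
  have hη : 0 < η := by rw [hηdef]; linarith
  set ε : ℝ := min (1/2) ((η / C) ^ (1/(q-1))) with hεdef
  have hε0 : 0 < ε := lt_min (by norm_num) (by positivity)
  have hε12 : ε ≤ 1/2 := min_le_left _ _
  -- unit vectors
  obtain ⟨u, hu⟩ := exists_norm_eq X (zero_le_one)
  obtain ⟨v, hv⟩ := exists_norm_eq Y (zero_le_one)
  set x : Fin 2 → WithLp p (X × Y) :=
    ![(WithLp.equiv p (X × Y)).symm (u, 0), (WithLp.equiv p (X × Y)).symm (0, v)] with hxdef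
  have hx0f : (x 0).fst = u := rfl
  have hx0s : (x 0).snd = 0 := rfl
  have hx1f : (x 1).fst = 0 := rfl
  have hx1s : (x 1).snd = v := rfl
  have hx : ∀ i, ‖x i‖ = 1 := by
    intro i
    fin_cases i <;>
      simp [WithLp.prod_norm_eq_add hq0', hx0f, hx0s, hx1f, hx1s, hu, hv,
        Real.zero_rpow hq0.ne', Real.zero_rpow hq0'.ne', Real.one_rpow]
  haveI : Nontrivial (WithLp p (X × Y)) := (WithLp.equiv p (X × Y)).symm.injective.nontrivial
  haveI := Module.punctured_nhds_neBot ℝ (WithLp p (X × Y))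
  have hkey := h 2 (by norm_num) x hx
  -- the eventual upper bound
  have hev : ∀ᶠ y in 𝓝[≠] (0 : WithLp p (X × Y)),
      (1 / ((2:ℕ) : ℝ)) * ∑ i, (‖x i + y‖ + ‖x i - y‖ - 2) / ‖y‖ ≤ c + η := by
    have hball : ∀ᶠ y in 𝓝 (0 : WithLp p (X × Y)), ‖y‖ < ε := by
      filter_upwards [Metric.ball_mem_nhds (0 : WithLp p (X × Y)) hε0] with y hy
      simpa [dist_zero_right] using hy
    filter_upwards [eventually_nhdsWithin_of_eventually_nhds hball,
      self_mem_nhdsWithin] with y hyε hy0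
    have hy0' : y ≠ 0 := hy0
    have hyn : 0 < ‖y‖ := norm_pos_iff.mpr hy0'
    set A : ℝ := ‖y.fst‖ with hAdef
    set B : ℝ := ‖y.snd‖ with hBdef
    have hA0 : 0 ≤ A := norm_nonneg _
    have hB0 : 0 ≤ B := norm_nonneg _
    have hynorm : ‖y‖ = (A ^ q + B ^ q) ^ (1/q) := WithLp.prod_norm_eq_add hq0' y
    have hyq : ‖y‖ ^ q = A ^ q + B ^ q := by
      rw [hynorm, one_div, Real.rpow_inv_rpow (by positivity) hq0.ne']
    have hAy : A ≤ ‖y‖ := by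
      calc A = (A ^ q) ^ (1/q) := by
            rw [one_div, Real.rpow_rpow_inv hA0 hq0.ne']
        _ ≤ (A ^ q + B ^ q) ^ (1/q) :=
            Real.rpow_le_rpow (by positivity)
              (le_add_of_nonneg_right (by positivity)) (by positivity)
        _ = ‖y‖ := hynorm.symm
    have hBy : B ≤ ‖y‖ := by
      calc B = (B ^ q) ^ (1/q) := by
            rw [one_div, Real.rpow_rpow_inv hB0 hq0.ne']
        _ ≤ (A ^ q + B ^ q) ^ (1/q) :=
            Real.rpow_le_rpow (by positivity)
              (le_add_of_nonneg_left (by positivity)) (by positivity)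
        _ = ‖y‖ := hynorm.symm
    have hA12 : A ≤ 1/2 := le_trans hAy (le_trans hyε.le hε12)
    have hB12 : B ≤ 1/2 := le_trans hBy (le_trans hyε.le hε12)
    -- per-vector estimates
    have est0p : ‖x 0 + y‖ ≤ 1 + A + C * B ^ q := by
      have hfst : (x 0 + y).fst = u + y.fst := by rw [WithLp.add_fst, hx0f]
      have hsnd : (x 0 + y).snd = y.snd := by rw [WithLp.add_snd, hx0s, zero_add]
      have hslb : 1/2 ≤ ‖u + y.fst‖ := by
        have h1 : ‖u‖ ≤ ‖u + y.fst‖ + ‖y.fst‖ := by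
          simpa using norm_add_le (u + y.fst) (-y.fst)
        rw [hu] at h1; linarith
      have hsub : ‖u + y.fst‖ ≤ 1 + A := by
        have := norm_add_le u y.fst; rw [hu] at this; linarith
      calc ‖x 0 + y‖ = (‖u + y.fst‖ ^ q + B ^ q) ^ (1/q) := by
            rw [WithLp.prod_norm_eq_add hq0', hfst, hsnd]
        _ ≤ ‖u + y.fst‖ + C * B ^ q := bernoulli_rpow_aux hq hslb hB0
        _ ≤ 1 + A + C * B ^ q := by linarith
    have est0m : ‖x 0 - y‖ ≤ 1 + A + C * B ^ q := by
      have hfst : (x 0 - y).fst = u - y.fst := by rw [WithLp.sub_fst, hx0f]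
      have hsnd : (x 0 - y).snd = -y.snd := by rw [WithLp.sub_snd, hx0s, zero_sub]
      have hslb : 1/2 ≤ ‖u - y.fst‖ := by
        have h1 : ‖u‖ ≤ ‖u - y.fst‖ + ‖y.fst‖ := by
          simpa using norm_add_le (u - y.fst) y.fst
        rw [hu] at h1; linarith
      have hsub : ‖u - y.fst‖ ≤ 1 + A := by
        have := norm_sub_le u y.fst; rw [hu] at this; linarith
      calc ‖x 0 - y‖ = (‖u - y.fst‖ ^ q + B ^ q) ^ (1/q) := by
            rw [WithLp.prod_norm_eq_add hq0', hfst, hsnd, norm_neg]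
        _ ≤ ‖u - y.fst‖ + C * B ^ q := bernoulli_rpow_aux hq hslb hB0
        _ ≤ 1 + A + C * B ^ q := by linarith
    have est1p : ‖x 1 + y‖ ≤ 1 + B + C * A ^ q := by
      have hfst : (x 1 + y).fst = y.fst := by rw [WithLp.add_fst, hx1f, zero_add]
      have hsnd : (x 1 + y).snd = v + y.snd := by rw [WithLp.add_snd, hx1s]
      have hslb : 1/2 ≤ ‖v + y.snd‖ := by
        have h1 : ‖v‖ ≤ ‖v + y.snd‖ + ‖y.snd‖ := by
          simpa using norm_add_le (v + y.snd) (-y.snd)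
        rw [hv] at h1; linarith
      have hsub : ‖v + y.snd‖ ≤ 1 + B := by
        have := norm_add_le v y.snd; rw [hv] at this; linarith
      calc ‖x 1 + y‖ = (A ^ q + ‖v + y.snd‖ ^ q) ^ (1/q) := by
            rw [WithLp.prod_norm_eq_add hq0', hfst, hsnd]
        _ = (‖v + y.snd‖ ^ q + A ^ q) ^ (1/q) := by rw [add_comm]
        _ ≤ ‖v + y.snd‖ + C * A ^ q := bernoulli_rpow_aux hq hslb hA0
        _ ≤ 1 + B + C * A ^ q := by linarith
    have est1m : ‖x 1 - y‖ ≤ 1 + B + C * A ^ q := by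
      have hfst : (x 1 - y).fst = -y.fst := by rw [WithLp.sub_fst, hx1f, zero_sub]
      have hsnd : (x 1 - y).snd = v - y.snd := by rw [WithLp.sub_snd, hx1s]
      have hslb : 1/2 ≤ ‖v - y.snd‖ := by
        have h1 : ‖v‖ ≤ ‖v - y.snd‖ + ‖y.snd‖ := by
          simpa using norm_add_le (v - y.snd) y.snd
        rw [hv] at h1; linarith
      have hsub : ‖v - y.snd‖ ≤ 1 + B := by
        have := norm_sub_le v y.snd; rw [hv] at this; linarith
      calc ‖x 1 - y‖ = (A ^ q + ‖v - y.snd‖ ^ q) ^ (1/q) := by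
            rw [WithLp.prod_norm_eq_add hq0', hfst, hsnd, norm_neg]
        _ = (‖v - y.snd‖ ^ q + A ^ q) ^ (1/q) := by rw [add_comm]
        _ ≤ ‖v - y.snd‖ + C * A ^ q := bernoulli_rpow_aux hq hslb hA0
        _ ≤ 1 + B + C * A ^ q := by linarith
    -- combine
    have hmean : A + B ≤ c * ‖y‖ := by
      calc A + B ≤ 2 ^ (1 - 1/q) * (A ^ q + B ^ q) ^ (1/q) := mean2_aux hq hA0 hB0
        _ = c * ‖y‖ := by rw [hcdef, hynorm]
    have hpow : C * ‖y‖ ^ (q - 1) ≤ η := by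
      have h1 : ‖y‖ ^ (q-1) ≤ η / C := by
        have h2 : ‖y‖ ≤ (η / C) ^ (1/(q-1)) := le_trans hyε.le (min_le_right _ _)
        calc ‖y‖ ^ (q-1) ≤ ((η / C) ^ (1/(q-1))) ^ (q-1) :=
              Real.rpow_le_rpow (norm_nonneg _) h2 (by linarith)
          _ = η / C := by
              rw [one_div, Real.rpow_inv_rpow (by positivity) (by intro hq1; linarith [sub_eq_zero.mp hq1] : q - 1 ≠ 0)]
      calc C * ‖y‖ ^ (q-1) ≤ C * (η / C) := by
            exact mul_le_mul_of_nonneg_left h1 hC.le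
        _ = η := by field_simp
    have hyq1 : ‖y‖ ^ q / ‖y‖ = ‖y‖ ^ (q - 1) := by
      rw [Real.rpow_sub hyn, Real.rpow_one]
    calc (1 / ((2:ℕ) : ℝ)) * ∑ i, (‖x i + y‖ + ‖x i - y‖ - 2) / ‖y‖
        = (1/2 : ℝ) * ((‖x 0 + y‖ + ‖x 0 - y‖ - 2) / ‖y‖
            + (‖x 1 + y‖ + ‖x 1 - y‖ - 2) / ‖y‖) := by
          rw [Fin.sum_univ_two]; norm_num
      _ ≤ (1/2 : ℝ) * ((2*A + 2*(C * B ^ q)) / ‖y‖ + (2*B + 2*(C * A ^ q)) / ‖y‖) := by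
          gcongr <;> linarith
      _ = (A + B) / ‖y‖ + C * (‖y‖ ^ q / ‖y‖) := by
          rw [hyq]; field_simp; ring
      _ ≤ c + η := by
          rw [hyq1]
          have h1 : (A + B) / ‖y‖ ≤ c := (div_le_iff₀ hyn).mpr hmean
          linarith
  -- the eventual lower bound (for coboundedness)
  have hlow : ∀ᶠ y in 𝓝[≠] (0 : WithLp p (X × Y)),
      (-2 : ℝ) ≤ (1 / ((2:ℕ) : ℝ)) * ∑ i, (‖x i + y‖ + ‖x i - y‖ - 2) / ‖y‖ := by
    filter_upwards [self_mem_nhdsWithin] with y hy0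
    have hyn : 0 < ‖y‖ := norm_pos_iff.mpr hy0
    have hterm : ∀ i : Fin 2, (-2 : ℝ) ≤ (‖x i + y‖ + ‖x i - y‖ - 2) / ‖y‖ := by
      intro i
      rw [le_div_iff₀ hyn]
      have h1 : ‖x i‖ ≤ ‖x i + y‖ + ‖y‖ := by simpa using norm_add_le (x i + y) (-y)
      have h2 : ‖x i‖ ≤ ‖x i - y‖ + ‖y‖ := by simpa using norm_add_le (x i - y) y
      rw [hx i] at h1 h2
      linarith
    rw [Fin.sum_univ_two]
    have h0 := hterm 0
    have h1 := hterm 1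
    push_cast
    linarith
  have hub := Filter.limsup_le_of_le
    (Filter.isCoboundedUnder_le_of_eventually_le _ hlow) hev
  have : δ ≤ c + η := le_trans hkey hub
  rw [hηdef] at this
  linarith
end
end

section
/- For any δ ∈ (1,2] there exists a Banach space X which is δ-average rough and which is not γ-average rough for any γ > δ. (Concretely, for δ = 2 one may take ℓ₁, and for δ = 2^{1−1/p} with 1 < p < ∞ one may take ℓ₁ ⊕_p ℓ₁.) -/
open Filter Topology

noncomputable section

section Helpers

open Real
open scoped ENNReal NNReal

/-! ### The sequence space `ℓ₁` -/

abbrev E₁ : Type := lp (fun _ : ℕ => ℝ) 1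

/-- The canonical basis-multiple vectors of `ℓ₁`. -/
def sgl (k : ℕ) (t : ℝ) : E₁ := lp.single 1 k t

lemma E1_norm_eq (u : E₁) : ‖u‖ = ∑' j, ‖u j‖ := by
  have := lp.norm_eq_tsum_rpow (p := 1) (by simp) u
  simpa using this

lemma E1_summable (u : E₁) : Summable (fun j => ‖u j‖) := by
  have := Memℓp.summable (p := 1) (by simp) (lp.memℓp u)
  simpa using this

lemma sgl_apply_self (k : ℕ) (t : ℝ) : sgl k t k = t :=
  lp.single_apply_self (E := fun _ : ℕ => ℝ) 1 k t

lemma sgl_apply_ne (k : ℕ) (t : ℝ) {j : ℕ} (h : j ≠ k) : sgl k t j = 0 :=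
  lp.single_apply_ne (E := fun _ : ℕ => ℝ) 1 k t h

lemma sgl_neg (k : ℕ) (t : ℝ) : sgl k (-t) = -(sgl k t) :=
  lp.single_neg (E := fun _ : ℕ => ℝ) 1 k t

lemma sgl_norm (k : ℕ) (t : ℝ) : ‖sgl k t‖ = ‖t‖ := by
  have := lp.norm_single (p := 1) (E := fun _ : ℕ => ℝ) (by simp) k t
  simpa [sgl] using this

lemma E1_norm_add_single (u : E₁) (k : ℕ) (t : ℝ) :
    ‖u + sgl k t‖ = ‖u‖ - ‖u k‖ + ‖u k + t‖ := by
  have hs1 := E1_summable (u + sgl k t)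
  have hs2 := E1_summable u
  have happ : ∀ j, (u + sgl k t) j = u j + sgl k t j := by
    intro j; rw [lp.coeFn_add]; rfl
  rw [E1_norm_eq, E1_norm_eq]
  rw [Summable.tsum_eq_add_tsum_ite hs1 k, Summable.tsum_eq_add_tsum_ite hs2 k]
  have h1 : (u + sgl k t) k = u k + t := by
    rw [happ, sgl_apply_self]
  have h2 : ∀ j, (if j = k then 0 else ‖(u + sgl k t) j‖)
      = (if j = k then 0 else ‖u j‖) := by
    intro j
    by_cases h : j = k
    · simp [h]
    · simp only [h, if_false, happ, sgl_apply_ne k t h, add_zero]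
  rw [tsum_congr h2, h1]
  ring

lemma E1_norm_add_single_ge (u : E₁) (k : ℕ) (t : ℝ) :
    ‖u‖ + ‖t‖ - 2 * ‖u k‖ ≤ ‖u + sgl k t‖ := by
  rw [E1_norm_add_single]
  have h3 : ‖t‖ ≤ ‖u k + t‖ + ‖u k‖ := by
    have h := norm_add_le (u k + t) (-(u k))
    have e : u k + t + -(u k) = t := by ring
    rw [e, norm_neg] at h
    exact h
  linarith

lemma E1_coord_small (u : E₁) : Tendsto (fun k => ‖u k‖) atTop (𝓝 0) :=
  (E1_summable u).tendsto_atTop_zero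

/-! ### Generic facts about the averaged difference quotient -/

variable {X : Type} [NormedAddCommGroup X] [NormedSpace ℝ X]

lemma avg_nonneg (n : ℕ) (x : Fin n → X) (hx : ∀ i, ‖x i‖ = 1) (y : X) :
    0 ≤ (1 / (n : ℝ)) * ∑ i, (‖x i + y‖ + ‖x i - y‖ - 2) / ‖y‖ := by
  apply mul_nonneg (by positivity)
  apply Finset.sum_nonneg
  intro i _
  apply div_nonneg _ (norm_nonneg y)
  have h : (2:ℝ) = ‖(x i + y) + (x i - y)‖ := by
    rw [show (x i + y) + (x i - y) = (2:ℝ) • x i by module, norm_smul, hx i]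
    norm_num
  have := norm_add_le (x i + y) (x i - y)
  linarith [this, h]

lemma avg_le_two (n : ℕ) (hn : 0 < n) (x : Fin n → X) (hx : ∀ i, ‖x i‖ = 1) (y : X)
    (hy : y ≠ 0) :
    (1 / (n : ℝ)) * ∑ i, (‖x i + y‖ + ‖x i - y‖ - 2) / ‖y‖ ≤ 2 := by
  have hy' : (0:ℝ) < ‖y‖ := norm_pos_iff.mpr hy
  have hterm : ∀ i : Fin n, (‖x i + y‖ + ‖x i - y‖ - 2) / ‖y‖ ≤ 2 := by
    intro i
    rw [div_le_iff₀ hy']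
    have h1 := norm_add_le (x i) y
    have h2 := norm_sub_le (x i) y
    rw [hx i] at h1 h2
    linarith
  calc (1 / (n : ℝ)) * ∑ i, (‖x i + y‖ + ‖x i - y‖ - 2) / ‖y‖
      ≤ (1 / (n : ℝ)) * ∑ _i : Fin n, (2:ℝ) := by
        apply mul_le_mul_of_nonneg_left (Finset.sum_le_sum fun i _ => hterm i) (by positivity)
    _ = 2 := by
        simp [Finset.sum_const, Finset.card_univ]
        field_simp

lemma le_limsup_aux (f : X → ℝ) (δ : ℝ)
    (hb : ∀ᶠ y in 𝓝[≠] (0:X), f y ≤ 2)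
    (y : ℕ → X) (hy : Tendsto y atTop (𝓝[≠] (0:X)))
    (c : ℕ → ℝ) (hc : Tendsto c atTop (𝓝 δ))
    (hfy : ∀ᶠ m in atTop, c m ≤ f (y m)) :
    δ ≤ Filter.limsup f (𝓝[≠] (0:X)) := by
  have hbdd : IsBoundedUnder (· ≤ ·) (𝓝[≠] (0:X)) f := ⟨2, by simpa using hb⟩
  have key : ∀ ε : ℝ, 0 < ε → δ - ε ≤ Filter.limsup f (𝓝[≠] (0:X)) := by
    intro ε hε
    apply le_limsup_of_frequently_le _ hbdd
    have hev : ∀ᶠ m in atTop, δ - ε ≤ f (y m) := by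
      filter_upwards [hfy, hc.eventually_const_le (show δ - ε < δ by linarith)] with m h1 h2
      linarith
    exact hy.frequently hev.frequently
  linarith [le_of_forall_sub_le fun ε hε => key ε hε]

lemma limsup_avg_le_two [Nontrivial X]
    (n : ℕ) (hn : 0 < n) (x : Fin n → X) (hx : ∀ i, ‖x i‖ = 1) :
    Filter.limsup
      (fun y : X => (1 / (n : ℝ)) * ∑ i, (‖x i + y‖ + ‖x i - y‖ - 2) / ‖y‖) (𝓝[≠] 0) ≤ 2 := by
  apply Filter.limsup_le_of_le
  · apply Filter.IsCoboundedUnder.of_frequently_ge (a := 0)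
    apply Eventually.frequently
    exact Eventually.of_forall fun y => avg_nonneg n x hx y
  · filter_upwards [self_mem_nhdsWithin] with z hz
    exact avg_le_two n hn x hx z hz

/-! ### Elementary real inequalities -/

lemma holder2 {p q : ℝ} (hpq : p.HolderConjugate q) {A B z₁ z₂ : ℝ}
    (hA : 0 ≤ A) (hB : 0 ≤ B) (hz₁ : 0 ≤ z₁) (hz₂ : 0 ≤ z₂)
    (hz : z₁ ^ q + z₂ ^ q ≤ 1) :
    A * z₁ + B * z₂ ≤ (A ^ p + B ^ p) ^ (1/p) := by
  set S := A ^ p + B ^ p with hS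
  have hSnn : 0 ≤ S := by positivity
  rcases eq_or_lt_of_le hSnn with hS0 | hSpos
  · have hA0 : A = 0 := by
      have h1 : A ^ p = 0 := by nlinarith [rpow_nonneg hA p, rpow_nonneg hB p]
      exact (rpow_eq_zero_iff_of_nonneg hA |>.mp h1).1
    have hB0 : B = 0 := by
      have h1 : B ^ p = 0 := by nlinarith [rpow_nonneg hA p, rpow_nonneg hB p]
      exact (rpow_eq_zero_iff_of_nonneg hB |>.mp h1).1
    rw [hA0, hB0]
    simp only [zero_mul, add_zero]
    positivity
  · have hN : 0 < S ^ (1/p) := rpow_pos_of_pos hSpos _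
    rw [← div_le_one hN]
    have hNp : (S ^ (1/p)) ^ p = S := by
      rw [one_div, Real.rpow_inv_rpow hSnn hpq.ne_zero]
    have hy1 := Real.young_inequality_of_nonneg (div_nonneg hA hN.le) hz₁ hpq
    have hy2 := Real.young_inequality_of_nonneg (div_nonneg hB hN.le) hz₂ hpq
    have hdiv1 : (A / S ^ (1/p)) ^ p = A ^ p / S := by
      rw [Real.div_rpow hA (rpow_nonneg hSnn _), hNp]
    have hdiv2 : (B / S ^ (1/p)) ^ p = B ^ p / S := by
      rw [Real.div_rpow hB (rpow_nonneg hSnn _), hNp]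
    have hq : 0 < q := hpq.symm.pos
    have hp : 0 < p := hpq.pos
    rw [hdiv1] at hy1
    rw [hdiv2] at hy2
    have h3 : A ^ p / S / p + B ^ p / S / p = 1 / p := by
      rw [← add_div, ← add_div, hS]
      field_simp [hS ▸ hSpos.ne']
    have h4 : z₁ ^ q / q + z₂ ^ q / q ≤ 1 / q := by
      rw [← add_div]
      exact div_le_div_of_nonneg_right hz hq.le
    have h5 : 1 / p + 1 / q = 1 := by
      simpa [one_div] using hpq.inv_add_inv_eq_one
    have : (A * z₁ + B * z₂) / S ^ (1/p) = A / S ^ (1/p) * z₁ + B / S ^ (1/p) * z₂ := by ring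
    rw [this]
    linarith

lemma rpow_pred_ge {p : ℝ} (hp : 1 < p) {α : ℝ} (hα : 0 ≤ α) (hα1 : α ^ p ≤ 1) :
    α ^ p ≤ α ^ (p - 1) := by
  rcases eq_or_lt_of_le hα with h0 | hpos
  · rw [← h0, Real.zero_rpow (by linarith), Real.zero_rpow (by linarith)]
  · have hle1 : α ≤ 1 := by
      by_contra hgt
      push_neg at hgt
      have : 1 < α ^ p := by
        rw [Real.one_lt_rpow_iff_of_pos hpos]
        left; exact ⟨hgt, by linarith⟩
      linarith
    exact Real.rpow_le_rpow_of_exponent_ge hpos hle1 (by linarith)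

lemma mul_rpow_pred {p : ℝ} (hp : 0 < p) {α : ℝ} (hα : 0 ≤ α) :
    α * α ^ (p - 1) = α ^ p := by
  have h := Real.rpow_add' hα (show (1:ℝ) + (p - 1) ≠ 0 by
    intro h; apply hp.ne'; linarith)
  calc α * α ^ (p - 1) = α ^ (1:ℝ) * α ^ (p - 1) := by rw [Real.rpow_one]
    _ = α ^ ((1:ℝ) + (p - 1)) := h.symm
    _ = α ^ p := by norm_num

lemma slope_ineq {p q : ℝ} (hpq : p.HolderConjugate q) {α β s A B : ℝ}
    (hα : 0 ≤ α) (hβ : 0 ≤ β) (hs : 0 ≤ s) (hαβ : α ^ p + β ^ p = 1)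
    (hA : α + s ≤ A) (hB : β + s ≤ B) :
    1 + s ≤ (A ^ p + B ^ p) ^ (1/p) := by
  have hp1 : 1 < p := hpq.lt
  have hp : 0 < p := hpq.pos
  set z₁ := α ^ (p - 1) with hz₁def
  set z₂ := β ^ (p - 1) with hz₂def
  have hz₁ : 0 ≤ z₁ := rpow_nonneg hα _
  have hz₂ : 0 ≤ z₂ := rpow_nonneg hβ _
  have hzq : z₁ ^ q + z₂ ^ q = 1 := by
    rw [hz₁def, hz₂def, ← Real.rpow_mul hα, ← Real.rpow_mul hβ,
      hpq.sub_one_mul_conj, hαβ]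
  have hA0 : 0 ≤ A := le_trans (by linarith) hA
  have hB0 : 0 ≤ B := le_trans (by linarith) hB
  have hhold := holder2 hpq hA0 hB0 hz₁ hz₂ hzq.le
  have e1 : α * z₁ = α ^ p := mul_rpow_pred hp hα
  have e2 : β * z₂ = β ^ p := mul_rpow_pred hp hβ
  have g1 : α ^ p ≤ z₁ := rpow_pred_ge hp1 hα (by nlinarith [rpow_nonneg hβ p])
  have g2 : β ^ p ≤ z₂ := rpow_pred_ge hp1 hβ (by nlinarith [rpow_nonneg hα p])
  have key : 1 + s ≤ A * z₁ + B * z₂ := by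
    have m1 : (α + s) * z₁ ≤ A * z₁ := mul_le_mul_of_nonneg_right hA hz₁
    have m2 : (β + s) * z₂ ≤ B * z₂ := mul_le_mul_of_nonneg_right hB hz₂
    have m3 : s * (α ^ p + β ^ p) ≤ s * (z₁ + z₂) :=
      mul_le_mul_of_nonneg_left (by linarith) hs
    nlinarith
  linarith

lemma upper_ineq {p : ℝ} (hp : 1 < p) {s t : ℝ} (hs : 0 ≤ s) (ht : 0 ≤ t) :
    ((1 + s) ^ p + t ^ p) ^ (1/p) ≤ 1 + s + t ^ p / p := by
  have h1p : (0:ℝ) < p := by linarith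
  set h := t ^ p / p with hh
  have hh0 : 0 ≤ h := by positivity
  have hx : (0:ℝ) < 1 + s := by linarith
  have key : (1 + s) ^ p + t ^ p ≤ (1 + s + h) ^ p := by
    have hb := one_add_mul_self_le_rpow_one_add
      (s := h / (1 + s)) (by linarith [div_nonneg hh0 hx.le]) hp.le
    have hmul := mul_le_mul_of_nonneg_left hb (rpow_nonneg hx.le p)
    have hr : (1 + s) ^ p * (1 + h / (1 + s)) ^ p = (1 + s + h) ^ p := by
      rw [← Real.mul_rpow hx.le (by positivity)]
      congr 1
      field_simp
    have hexp : (1 + s) ^ p * (1 + p * (h / (1 + s)))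
        = (1 + s) ^ p + p * h * ((1 + s) ^ p / (1 + s)) := by
      field_simp
    have hpow : 1 ≤ (1 + s) ^ p / (1 + s) := by
      rw [le_div_iff₀ hx]
      have := Real.rpow_le_rpow_of_exponent_le (show (1:ℝ) ≤ 1 + s by linarith) hp.le
      simpa [Real.rpow_one] using this
    have hph : p * h = t ^ p := by rw [hh]; field_simp
    have h9 : p * h * 1 ≤ p * h * ((1 + s) ^ p / (1 + s)) :=
      mul_le_mul_of_nonneg_left hpow (by positivity)
    nlinarith
  calc ((1 + s) ^ p + t ^ p) ^ (1/p)
      ≤ ((1 + s + h) ^ p) ^ (1/p) :=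
        Real.rpow_le_rpow (by positivity) key (by positivity)
    _ = 1 + s + h := by rw [one_div, Real.rpow_rpow_inv (by positivity) h1p.ne']

/-! ### The space `ℓ₁ ⊕ₚ ℓ₁` -/

def Pe (pr : ℝ) : ℝ≥0∞ := ENNReal.ofReal pr

abbrev Xsp (pr : ℝ) : Type := WithLp (Pe pr) (E₁ × E₁)

instance (pr : ℝ) [Fact (1 ≤ pr)] : Fact (1 ≤ Pe pr) :=
  ⟨ENNReal.one_le_ofReal.mpr (Fact.out)⟩

def mkX (pr : ℝ) (u v : E₁) : Xsp pr := (WithLp.equiv (Pe pr) (E₁ × E₁)).symm (u, v)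

section XX

variable (pr : ℝ) [Fact (1 ≤ pr)]

lemma Pe_toReal : (Pe pr).toReal = pr :=
  ENNReal.toReal_ofReal (by linarith [(Fact.out : 1 ≤ pr)])

lemma Xsp_norm (x : Xsp pr) :
    ‖x‖ = (‖(WithLp.equiv (Pe pr) (E₁ × E₁) x).fst‖ ^ pr
      + ‖(WithLp.equiv (Pe pr) (E₁ × E₁) x).snd‖ ^ pr) ^ (1 / pr) := by
  have h1 : (1:ℝ) ≤ pr := Fact.out
  have := WithLp.prod_norm_eq_add (p := Pe pr) (α := E₁) (β := E₁)
    (by rw [Pe_toReal pr]; linarith) x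
  rw [Pe_toReal pr] at this
  exact this

lemma mkX_norm (u v : E₁) : ‖mkX pr u v‖ = (‖u‖ ^ pr + ‖v‖ ^ pr) ^ (1 / pr) :=
  Xsp_norm pr _

lemma mkX_unit_fst : ‖mkX pr (sgl 0 1) 0‖ = 1 := by
  have := WithLp.norm_toLp_fst (Pe pr) E₁ E₁ (sgl 0 1)
  rw [show WithLp.toLp (Pe pr) (sgl 0 1, (0:E₁)) = mkX pr (sgl 0 1) 0 from rfl] at this
  rw [this, sgl_norm]
  norm_num

lemma mkX_unit_snd : ‖mkX pr 0 (sgl 0 1)‖ = 1 := by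
  have := WithLp.norm_toLp_snd (Pe pr) E₁ E₁ (sgl 0 1)
  rw [show WithLp.toLp (Pe pr) ((0:E₁), sgl 0 1) = mkX pr 0 (sgl 0 1) from rfl] at this
  rw [this, sgl_norm]
  norm_num

lemma lower_bound (δ : ℝ) (hδ : 0 < δ)
    (hslope : ∀ α β s A B : ℝ, 0 ≤ α → 0 ≤ β → 0 ≤ s → α ^ pr + β ^ pr = 1 →
      α + s ≤ A → β + s ≤ B →
      1 + (δ * 2 ^ (1/pr) / 2) * s ≤ (A ^ pr + B ^ pr) ^ (1/pr)) :
    AverageRough (Xsp pr) δ := by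
  have hpr : (1:ℝ) ≤ pr := Fact.out
  have hpr0 : (0:ℝ) < pr := by linarith
  set κ := δ * 2 ^ (1/pr) / 2 with hκ
  have h2p : (0:ℝ) < 2 ^ (1/pr) := rpow_pos_of_pos two_pos _
  intro n hn x hx
  set u : Fin n → E₁ := fun i => (WithLp.equiv (Pe pr) (E₁ × E₁) (x i)).fst with hu
  set v : Fin n → E₁ := fun i => (WithLp.equiv (Pe pr) (E₁ × E₁) (x i)).snd with hv
  have hsum : ∀ i, ‖u i‖ ^ pr + ‖v i‖ ^ pr = 1 := by
    intro i
    have h1 := (Xsp_norm pr (x i)).symm.trans (hx i)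
    have hSnn : (0:ℝ) ≤ ‖u i‖ ^ pr + ‖v i‖ ^ pr := by positivity
    have := congrArg (fun z : ℝ => z ^ pr) h1
    simp only [one_div] at this
    rwa [Real.rpow_inv_rpow hSnn hpr0.ne', Real.one_rpow] at this
  -- the sequence of perturbations
  set tm : ℕ → ℝ := fun m => 1 / ((m:ℝ) + 1) with htm
  have htm_pos : ∀ m, 0 < tm m := by
    intro m; positivity
  have htm0 : Tendsto tm atTop (𝓝 0) := tendsto_one_div_add_atTop_nhds_zero_nat
  have exk : ∀ m : ℕ, ∃ k : ℕ, ∀ i : Fin n,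
      ‖u i k‖ < (tm m)^2 ∧ ‖v i k‖ < (tm m)^2 := by
    intro m
    have hε : (0:ℝ) < (tm m)^2 := by positivity
    have : ∀ᶠ k in atTop, ∀ i : Fin n, ‖u i k‖ < (tm m)^2 ∧ ‖v i k‖ < (tm m)^2 :=
      eventually_all.mpr fun i =>
        ((E1_coord_small (u i)).eventually_lt_const hε).and
          ((E1_coord_small (v i)).eventually_lt_const hε)
    exact this.exists
  set k : ℕ → ℕ := fun m => (exk m).choose with hk
  have hkspec : ∀ m (i : Fin n), ‖u i (k m)‖ < (tm m)^2 ∧ ‖v i (k m)‖ < (tm m)^2 :=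
    fun m => (exk m).choose_spec
  set y : ℕ → Xsp pr := fun m => mkX pr (sgl (k m) (tm m)) (sgl (k m) (tm m)) with hy
  have hnormy : ∀ m, ‖y m‖ = 2 ^ (1/pr) * tm m := by
    intro m
    rw [hy]
    simp only
    rw [mkX_norm, sgl_norm, Real.norm_eq_abs, abs_of_pos (htm_pos m)]
    have h1 : tm m ^ pr + tm m ^ pr = 2 * tm m ^ pr := by ring
    rw [h1, Real.mul_rpow (by norm_num) (rpow_nonneg (htm_pos m).le _), one_div,
      Real.rpow_rpow_inv (htm_pos m).le hpr0.ne', ← one_div]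
  have hyne : ∀ m, y m ≠ 0 := by
    intro m
    have : ‖y m‖ ≠ 0 := by
      rw [hnormy m]; positivity
    simpa [norm_eq_zero] using this
  have hytendsto : Tendsto y atTop (𝓝[≠] (0 : Xsp pr)) := by
    rw [tendsto_nhdsWithin_iff]
    constructor
    · rw [tendsto_zero_iff_norm_tendsto_zero]
      have : Tendsto (fun m => 2 ^ (1/pr) * tm m) atTop (𝓝 (2 ^ (1/pr) * 0)) :=
        htm0.const_mul _
      rw [mul_zero] at this
      exact this.congr fun m => (hnormy m).symm
    · exact Eventually.of_forall fun m => Set.mem_compl_singleton_iff.mpr (hyne m)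
  set c : ℕ → ℝ := fun m => δ * (1 - 2 * tm m) with hc
  have hctendsto : Tendsto c atTop (𝓝 δ) := by
    have : Tendsto (fun m => δ * (1 - 2 * tm m)) atTop (𝓝 (δ * (1 - 2 * 0))) :=
      (((htm0.const_mul 2).const_sub 1).const_mul δ)
    simpa using this
  apply le_limsup_aux _ δ _ y hytendsto c hctendsto
  · -- main estimate
    rw [eventually_atTop]
    refine ⟨1, fun m hm => ?_⟩
    set t := tm m with ht'
    have ht : 0 < t := htm_pos m
    have ht2 : t ≤ 1/2 := by
      rw [ht', htm]
      simp only
      rw [div_le_div_iff₀ (by positivity) (by norm_num)]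
      have : (1:ℝ) ≤ (m:ℝ) := by exact_mod_cast hm
      linarith
    set s := t - 2 * t^2 with hs'
    have hs : 0 ≤ s := by nlinarith
    have key : ∀ i : Fin n, 1 + κ * s ≤ ‖x i + y m‖ ∧ 1 + κ * s ≤ ‖x i - y m‖ := by
      intro i
      have hα : 0 ≤ ‖u i‖ := norm_nonneg _
      have hβ : 0 ≤ ‖v i‖ := norm_nonneg _
      constructor
      · have hfst : (WithLp.equiv (Pe pr) (E₁ × E₁) (x i + y m)).fst
            = u i + sgl (k m) t := rfl
        have hsnd : (WithLp.equiv (Pe pr) (E₁ × E₁) (x i + y m)).snd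
            = v i + sgl (k m) t := rfl
        rw [Xsp_norm pr (x i + y m), hfst, hsnd]
        apply hslope _ _ s _ _ hα hβ hs (hsum i)
        · have h1 := E1_norm_add_single_ge (u i) (k m) t
          have h2 := (hkspec m i).1
          rw [Real.norm_eq_abs, abs_of_pos ht] at h1
          rw [hs']; linarith
        · have h1 := E1_norm_add_single_ge (v i) (k m) t
          have h2 := (hkspec m i).2
          rw [Real.norm_eq_abs, abs_of_pos ht] at h1
          rw [hs']; linarith
      · have hfst : (WithLp.equiv (Pe pr) (E₁ × E₁) (x i - y m)).fst
            = u i + sgl (k m) (-t) := by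
          rw [sgl_neg]; rfl
        have hsnd : (WithLp.equiv (Pe pr) (E₁ × E₁) (x i - y m)).snd
            = v i + sgl (k m) (-t) := by
          rw [sgl_neg]; rfl
        rw [Xsp_norm pr (x i - y m), hfst, hsnd]
        apply hslope _ _ s _ _ hα hβ hs (hsum i)
        · have h1 := E1_norm_add_single_ge (u i) (k m) (-t)
          have h2 := (hkspec m i).1
          rw [Real.norm_eq_abs, abs_neg, abs_of_pos ht] at h1
          rw [hs']; linarith
        · have h1 := E1_norm_add_single_ge (v i) (k m) (-t)
          have h2 := (hkspec m i).2
          rw [Real.norm_eq_abs, abs_neg, abs_of_pos ht] at h1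
          rw [hs']; linarith
    have hterm : ∀ i : Fin n, 2 * κ * s / ‖y m‖ ≤ (‖x i + y m‖ + ‖x i - y m‖ - 2) / ‖y m‖ := by
      intro i
      apply div_le_div_of_nonneg_right _ (norm_nonneg _)
      have := key i
      linarith [this.1, this.2]
    have hsum2 : (n:ℝ) * (2 * κ * s / ‖y m‖) ≤ ∑ i, (‖x i + y m‖ + ‖x i - y m‖ - 2) / ‖y m‖ := by
      calc (n:ℝ) * (2 * κ * s / ‖y m‖) = ∑ _i : Fin n, 2 * κ * s / ‖y m‖ := by
            rw [Finset.sum_const, Finset.card_univ, Fintype.card_fin, nsmul_eq_mul]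
        _ ≤ _ := Finset.sum_le_sum fun i _ => hterm i
    have hfinal : c m ≤ (1/(n:ℝ)) * ∑ i, (‖x i + y m‖ + ‖x i - y m‖ - 2) / ‖y m‖ := by
      have hn' : (0:ℝ) < n := by exact_mod_cast hn
      have h3 : c m = 2 * κ * s / ‖y m‖ := by
        rw [hc, hnormy m, ← ht', hκ, hs']
        field_simp
        ring
      rw [h3]
      calc 2 * κ * s / ‖y m‖ = (1/(n:ℝ)) * ((n:ℝ) * (2 * κ * s / ‖y m‖)) := by
            field_simp
        _ ≤ _ := mul_le_mul_of_nonneg_left hsum2 (by positivity)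
    exact hfinal
  · filter_upwards [self_mem_nhdsWithin] with z hz
    exact avg_le_two n hn x hx z hz

lemma upper_est (hpr1 : 1 < pr) {q : ℝ} (hpq : pr.HolderConjugate q)
    (y : Xsp pr) (hy : y ≠ 0) :
    (1 / ((2:ℕ) : ℝ)) * ∑ i : Fin 2,
      (‖(![mkX pr (sgl 0 1) 0, mkX pr 0 (sgl 0 1)]) i + y‖
        + ‖(![mkX pr (sgl 0 1) 0, mkX pr 0 (sgl 0 1)]) i - y‖ - 2) / ‖y‖
    ≤ 2 ^ (1 - 1/pr) + ‖y‖ ^ (pr - 1) / pr := by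
  have hpr0 : (0:ℝ) < pr := by linarith
  set a := (WithLp.equiv (Pe pr) (E₁ × E₁) y).fst with ha
  set b := (WithLp.equiv (Pe pr) (E₁ × E₁) y).snd with hb
  set s := ‖a‖ with hs
  set t := ‖b‖ with ht
  have hs0 : 0 ≤ s := norm_nonneg _
  have ht0 : 0 ≤ t := norm_nonneg _
  have hynorm : ‖y‖ = (s ^ pr + t ^ pr) ^ (1/pr) := Xsp_norm pr y
  have hY : 0 < ‖y‖ := norm_pos_iff.mpr hy
  have hYpr : ‖y‖ ^ pr = s ^ pr + t ^ pr := by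
    rw [hynorm, one_div, Real.rpow_inv_rpow (by positivity) hpr0.ne']
  -- bounds on the four norms
  have bound1 : ∀ c w : E₁, ‖c‖ ≤ 1 + s → ‖w‖ ≤ t →
      ‖mkX pr c w‖ ≤ 1 + s + t ^ pr / pr := by
    intro c w hc hw
    rw [show ‖mkX pr c w‖ = (‖c‖ ^ pr + ‖w‖ ^ pr) ^ (1/pr) from Xsp_norm pr _]
    calc (‖c‖ ^ pr + ‖w‖ ^ pr) ^ (1/pr)
        ≤ ((1 + s) ^ pr + t ^ pr) ^ (1/pr) := by
          apply Real.rpow_le_rpow (by positivity)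
          · exact add_le_add (Real.rpow_le_rpow (norm_nonneg _) hc hpr0.le)
              (Real.rpow_le_rpow (norm_nonneg _) hw hpr0.le)
          · positivity
      _ ≤ 1 + s + t ^ pr / pr := upper_ineq hpr1 hs0 ht0
  have bound2 : ∀ z d : E₁, ‖z‖ ≤ s → ‖d‖ ≤ 1 + t →
      ‖mkX pr z d‖ ≤ 1 + t + s ^ pr / pr := by
    intro z d hz hd
    rw [show ‖mkX pr z d‖ = (‖z‖ ^ pr + ‖d‖ ^ pr) ^ (1/pr) from Xsp_norm pr _]
    calc (‖z‖ ^ pr + ‖d‖ ^ pr) ^ (1/pr)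
        ≤ (s ^ pr + (1 + t) ^ pr) ^ (1/pr) := by
          apply Real.rpow_le_rpow (by positivity)
          · exact add_le_add (Real.rpow_le_rpow (norm_nonneg _) hz hpr0.le)
              (Real.rpow_le_rpow (norm_nonneg _) hd hpr0.le)
          · positivity
      _ ≤ 1 + t + s ^ pr / pr := by
          rw [add_comm (s ^ pr) ((1 + t) ^ pr)]
          exact upper_ineq hpr1 ht0 hs0
  -- triangle-inequality facts
  have tri1 : ‖sgl 0 1 + a‖ ≤ 1 + s := by
    have := norm_add_le (sgl 0 1) a
    rw [sgl_norm] at this; simp only [norm_one] at this; linarith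
  have tri1' : ‖sgl 0 1 - a‖ ≤ 1 + s := by
    have := norm_sub_le (sgl 0 1) a
    rw [sgl_norm] at this; simp only [norm_one] at this; linarith
  have tri2 : ‖sgl 0 1 + b‖ ≤ 1 + t := by
    have := norm_add_le (sgl 0 1) b
    rw [sgl_norm] at this; simp only [norm_one] at this; linarith
  have tri2' : ‖sgl 0 1 - b‖ ≤ 1 + t := by
    have := norm_sub_le (sgl 0 1) b
    rw [sgl_norm] at this; simp only [norm_one] at this; linarith
  have k1p : ‖mkX pr (sgl 0 1) 0 + y‖ ≤ 1 + s + t ^ pr / pr := by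
    have e : mkX pr (sgl 0 1) 0 + y = mkX pr (sgl 0 1 + a) (0 + b) := rfl
    rw [e]
    exact bound1 _ _ tri1 (by rw [zero_add])
  have k1m : ‖mkX pr (sgl 0 1) 0 - y‖ ≤ 1 + s + t ^ pr / pr := by
    have e : mkX pr (sgl 0 1) 0 - y = mkX pr (sgl 0 1 - a) (0 - b) := rfl
    rw [e]
    exact bound1 _ _ tri1' (by rw [zero_sub, norm_neg])
  have k2p : ‖mkX pr 0 (sgl 0 1) + y‖ ≤ 1 + t + s ^ pr / pr := by
    have e : mkX pr 0 (sgl 0 1) + y = mkX pr (0 + a) (sgl 0 1 + b) := rfl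
    rw [e]
    exact bound2 _ _ (by rw [zero_add]) tri2
  have k2m : ‖mkX pr 0 (sgl 0 1) - y‖ ≤ 1 + t + s ^ pr / pr := by
    have e : mkX pr 0 (sgl 0 1) - y = mkX pr (0 - a) (sgl 0 1 - b) := rfl
    rw [e]
    exact bound2 _ _ (by rw [zero_sub, norm_neg]) tri2'
  -- Hölder step : s + t ≤ 2 ^ (1 - 1/pr) * ‖y‖
  have hq0 : (0:ℝ) < q := hpq.symm.pos
  have hqinv : 1/q = 1 - 1/pr := by
    have := hpq.inv_add_inv_eq_one
    rw [one_div, one_div]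
    linarith
  have hst : s + t ≤ 2 ^ (1 - 1/pr) * ‖y‖ := by
    set w : ℝ := 2 ^ (-(1/q)) with hw
    have hw0 : (0:ℝ) < w := rpow_pos_of_pos two_pos _
    have hwq : w ^ q + w ^ q ≤ 1 := by
      have h1 : w ^ q = 2 ^ (-(1/q) * q) := by
        rw [hw, ← Real.rpow_mul (by norm_num : (0:ℝ) ≤ 2)]
      have h2 : -(1/q) * q = -1 := by field_simp
      rw [h1, h2, Real.rpow_neg_one]
      norm_num
    have hold := holder2 hpq hs0 ht0 hw0.le hw0.le hwq
    rw [← hynorm] at hold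
    have hwinv : w * 2 ^ (1/q) = 1 := by
      rw [hw, ← Real.rpow_add two_pos]
      norm_num
    have h2q : (0:ℝ) < 2 ^ (1/q) := rpow_pos_of_pos two_pos _
    have h3 : s + t ≤ ‖y‖ * 2 ^ (1/q) := by
      nlinarith
    rw [hqinv] at h3
    linarith
  -- put everything together
  have hsplit : ‖y‖ ^ pr = ‖y‖ ^ (pr - 1) * ‖y‖ := by
    have h5 : ‖y‖ ^ ((pr - 1) + 1) = ‖y‖ ^ (pr - 1) * ‖y‖ ^ (1:ℝ) := Real.rpow_add hY _ _
    rw [Real.rpow_one] at h5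
    calc ‖y‖ ^ pr = ‖y‖ ^ (pr - 1 + 1) := by norm_num
      _ = _ := h5
  rw [Fin.sum_univ_two]
  simp only [Matrix.cons_val_zero, Matrix.cons_val_one, Matrix.head_cons]
  have hcomb : (1 / ((2:ℕ) : ℝ)) * ((‖mkX pr (sgl 0 1) 0 + y‖ + ‖mkX pr (sgl 0 1) 0 - y‖ - 2) / ‖y‖
      + (‖mkX pr 0 (sgl 0 1) + y‖ + ‖mkX pr 0 (sgl 0 1) - y‖ - 2) / ‖y‖)
      ≤ (s + t + (s ^ pr + t ^ pr)/pr) / ‖y‖ := by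
    have hT0 : (‖mkX pr (sgl 0 1) 0 + y‖ + ‖mkX pr (sgl 0 1) 0 - y‖ - 2) / ‖y‖
        ≤ (2*s + 2*(t ^ pr / pr)) / ‖y‖ := by
      apply div_le_div_of_nonneg_right _ hY.le
      linarith
    have hT1 : (‖mkX pr 0 (sgl 0 1) + y‖ + ‖mkX pr 0 (sgl 0 1) - y‖ - 2) / ‖y‖
        ≤ (2*t + 2*(s ^ pr / pr)) / ‖y‖ := by
      apply div_le_div_of_nonneg_right _ hY.le
      linarith
    have heq : (1 / ((2:ℕ) : ℝ)) * ((2*s + 2*(t ^ pr / pr)) / ‖y‖ + (2*t + 2*(s ^ pr / pr)) / ‖y‖)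
        = (s + t + (s ^ pr + t ^ pr)/pr) / ‖y‖ := by
      push_cast
      field_simp
      ring
    rw [← heq]
    have h12 : (0:ℝ) ≤ 1 / ((2:ℕ) : ℝ) := by norm_num
    apply mul_le_mul_of_nonneg_left _ h12
    linarith
  have hfin : (s + t + (s ^ pr + t ^ pr)/pr) / ‖y‖ ≤ 2 ^ (1 - 1/pr) + ‖y‖ ^ (pr - 1) / pr := by
    rw [div_le_iff₀ hY]
    have expand : (2 ^ (1 - 1/pr) + ‖y‖ ^ (pr - 1) / pr) * ‖y‖
        = 2 ^ (1 - 1/pr) * ‖y‖ + ‖y‖ ^ pr / pr := by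
      rw [hsplit]
      field_simp
    rw [expand, hYpr]
    linarith
  exact le_trans hcomb hfin
instance : Nontrivial (Xsp pr) := by
  refine ⟨⟨mkX pr (sgl 0 1) 0, 0, ?_⟩⟩
  intro h
  have h1 := mkX_unit_fst pr
  rw [h] at h1
  simp at h1

lemma not_rough_p (hpr1 : 1 < pr) {q : ℝ} (hpq : pr.HolderConjugate q)
    (γ : ℝ) (hγ : 2 ^ (1 - 1/pr) < γ) : ¬ AverageRough (Xsp pr) γ := by
  intro h
  have hxw : ∀ i : Fin 2, ‖(![mkX pr (sgl 0 1) 0, mkX pr 0 (sgl 0 1)]) i‖ = 1 := by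
    intro i
    fin_cases i
    · simpa using mkX_unit_fst pr
    · simpa using mkX_unit_snd pr
  have hle := h 2 (by norm_num) _ hxw
  have hub : Filter.limsup
      (fun y : Xsp pr => (1 / ((2:ℕ) : ℝ)) * ∑ i : Fin 2,
        (‖(![mkX pr (sgl 0 1) 0, mkX pr 0 (sgl 0 1)]) i + y‖
          + ‖(![mkX pr (sgl 0 1) 0, mkX pr 0 (sgl 0 1)]) i - y‖ - 2) / ‖y‖) (𝓝[≠] 0)
      ≤ 2 ^ (1 - 1/pr) := by
    apply le_of_forall_pos_le_add
    intro ε hε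
    have hpr0 : (0:ℝ) < pr := by linarith
    set r : ℝ := (pr * ε) ^ (pr - 1)⁻¹ with hr'
    have hr : 0 < r := rpow_pos_of_pos (by positivity) _
    have hrpow : r ^ (pr - 1) = pr * ε := by
      rw [hr', Real.rpow_inv_rpow (by positivity) (by intro hc; rw [sub_eq_zero] at hc; exact hpr1.ne' hc)]
    apply Filter.limsup_le_of_le
    · apply Filter.IsCoboundedUnder.of_frequently_ge (a := 0)
      apply Eventually.frequently
      exact Eventually.of_forall fun y => avg_nonneg 2 _ hxw y
    · have hball : ∀ᶠ y in 𝓝 (0 : Xsp pr), ‖y‖ < r := by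
        filter_upwards [Metric.ball_mem_nhds (0 : Xsp pr) hr] with z hz
        exact mem_ball_zero_iff.mp hz
      filter_upwards [eventually_nhdsWithin_of_eventually_nhds hball,
        self_mem_nhdsWithin] with z hz1 hz2
      have hz2' : z ≠ 0 := hz2
      refine le_trans (upper_est pr hpr1 hpq z hz2') ?_
      have h1 : ‖z‖ ^ (pr - 1) ≤ r ^ (pr - 1) :=
        Real.rpow_le_rpow (norm_nonneg _) hz1.le (by linarith)
      rw [hrpow] at h1
      have : ‖z‖ ^ (pr - 1) / pr ≤ ε := by
        rw [div_le_iff₀ hpr0]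
        linarith [h1]
      linarith
  linarith

end XX

end Helpers

/-- For any `δ ∈ (1,2]` there is a Banach space which is `δ`-average rough but not
`γ`-average rough for any `γ > δ`. -/
theorem exists_banach_exactly_averageRough (δ : ℝ) (h1 : 1 < δ) (h2 : δ ≤ 2) :
    ∃ (X : Type) (i₁ : NormedAddCommGroup X)
      (i₂ : @NormedSpace ℝ X _ i₁.toSeminormedAddCommGroup),
      @CompleteSpace X i₁.toUniformSpace ∧
      @AverageRough X i₁ i₂ δ ∧
      ∀ γ : ℝ, δ < γ → ¬ @AverageRough X i₁ i₂ γ := by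
  by_cases hδ2 : δ = 2
  · -- use ℓ₁ ⊕₁ ℓ₁
    subst hδ2
    haveI : Fact ((1:ℝ) ≤ 1) := ⟨le_rfl⟩
    refine ⟨Xsp 1, inferInstance, inferInstance, inferInstance, ?_, ?_⟩
    · apply lower_bound 1 2 two_pos
      intro α β s A B hα hβ hs hαβ hA hB
      norm_num [Real.rpow_one] at hαβ ⊢
      nlinarith
    · intro γ hγ h
      have hx1 : ∀ i : Fin 1, ‖(![mkX 1 (sgl 0 1) 0]) i‖ = 1 := by
        intro i
        fin_cases i
        simpa using mkX_unit_fst 1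
      have hle := h 1 one_pos _ hx1
      have hub := limsup_avg_le_two 1 one_pos _ hx1
      linarith
  · -- 1 < δ < 2
    have hδlt : δ < 2 := lt_of_le_of_ne h2 hδ2
    have hδ0 : (0:ℝ) < δ := by linarith
    set L := Real.logb 2 δ with hL
    have hL0 : 0 < L := Real.logb_pos one_lt_two h1
    have hL1 : L < 1 := by
      have h3 : Real.logb 2 δ < Real.logb 2 2 := Real.logb_lt_logb one_lt_two hδ0 hδlt
      rwa [Real.logb_self_eq_one one_lt_two] at h3
    set pr := (1 - L)⁻¹ with hpr'
    have hpr1 : 1 < pr := (one_lt_inv₀ (by linarith)).mpr (by linarith)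
    haveI : Fact (1 ≤ pr) := ⟨hpr1.le⟩
    have hinv : 1/pr = 1 - L := by
      rw [hpr', one_div, inv_inv]
    have hδeq : (2:ℝ) ^ (1 - 1/pr) = δ := by
      rw [hinv, show (1:ℝ) - (1 - L) = L by ring, hL]
      exact Real.rpow_logb two_pos (by norm_num) hδ0
    have hpq := Real.HolderConjugate.conjExponent hpr1
    refine ⟨Xsp pr, inferInstance, inferInstance, inferInstance, ?_, ?_⟩
    · apply lower_bound pr δ hδ0
      intro α β s A B hα hβ hs hαβ hA hB
      have hκ : δ * 2 ^ (1/pr) / 2 = 1 := by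
        rw [← hδeq, ← Real.rpow_add two_pos]
        norm_num
      rw [hκ, one_mul]
      exact slope_ineq hpq hα hβ hs hαβ hA hB
    · intro γ hγ
      exact not_rough_p pr hpr1 hpq γ (by rw [hδeq]; exact hγ)
end
end

section
/- For any δ ∈ (1,2] there exists a Banach space X such that every convex combination of slices of the unit ball B_X has diameter at least δ, and δ is the infimum of the diameters of convex combinations of slices of B_X (i.e., for every γ > δ there is a convex combination of slices of B_X of diameter less than γ). -/
open Filter Topology

noncomputable section

/-- The slice `S(B_X, f, α) = {x ∈ B_X : f x > 1 - α}` of the closed unit ball. -/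
def Slice (X : Type*) [NormedAddCommGroup X] [NormedSpace ℝ X]
    (f : X →L[ℝ] ℝ) (α : ℝ) : Set X :=
  {x ∈ Metric.closedBall (0 : X) 1 | 1 - α < f x}

/-- `C` is a convex combination of slices of the closed unit ball of `X`. -/
def IsConvexCombOfSlices (X : Type*) [NormedAddCommGroup X] [NormedSpace ℝ X]
    (C : Set X) : Prop :=
  ∃ (n : ℕ), 0 < n ∧ ∃ (lam : Fin n → ℝ) (f : Fin n → X →L[ℝ] ℝ) (α : Fin n → ℝ),
    (∀ i, 0 ≤ lam i) ∧ (∑ i, lam i) = 1 ∧ (∀ i, ‖f i‖ = 1) ∧ (∀ i, 0 < α i) ∧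
    C = {z : X | ∃ w : Fin n → X, (∀ i, w i ∈ Slice X (f i) (α i)) ∧ z = ∑ i, lam i • w i}

/-! Take `X = ℝ × ℓ∞` with the norm `‖(t, y)‖ = max |t| (a|t| + ‖y‖)`, where `a = 1 - δ/2`.
Every functional on `ℓ∞` is absolutely summable along the unit vectors `eₘ`, so it is almost blind
to `eₘ` for large `m`. Hence, given finitely many slices, a single large `m` can be chosen such
that in each slice some point `(t, y)` may have its `m`-th coordinate `yₘ` set to either of
`±(1 - a|t|)` without leaving the slice; averaging these points with the weights of a convex
combination of the slices yields two of its points at distance at least `2(1 - a) = δ`.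
Conversely, thin slices of `(t, y) ↦ t` only contain points with `t ≈ 1`, hence
`‖y‖ ≤ 1 - a + o(1)`, and so have diameter close to `2(1 - a)`. -/

open scoped NNReal BoundedContinuousFunction

section Slices

variable {X : Type*} [NormedAddCommGroup X] [NormedSpace ℝ X]

lemma mem_slice_iff {f : X →L[ℝ] ℝ} {α : ℝ} {x : X} :
    x ∈ Slice X f α ↔ ‖x‖ ≤ 1 ∧ 1 - α < f x := by
  simp [Slice]

lemma slice_nonempty {f : X →L[ℝ] ℝ} (hf : ‖f‖ = 1) {α : ℝ} (hα : 0 < α) :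
    (Slice X f α).Nonempty := by
  obtain ⟨x, hx, hfx⟩ := f.exists_lt_apply_of_lt_opNorm (show 1 - α < ‖f‖ by linarith)
  rcases le_or_gt 0 (f x) with h | h
  · refine ⟨x, mem_slice_iff.2 ⟨hx.le, ?_⟩⟩
    rwa [Real.norm_eq_abs, abs_of_nonneg h] at hfx
  · refine ⟨-x, mem_slice_iff.2 ⟨(norm_neg x).trans_le hx.le, ?_⟩⟩
    rwa [Real.norm_eq_abs, abs_of_neg h, ← map_neg] at hfx

lemma isConvexCombOfSlices_slice {f : X →L[ℝ] ℝ} (hf : ‖f‖ = 1) {α : ℝ} (hα : 0 < α) :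
    IsConvexCombOfSlices X (Slice X f α) := by
  refine ⟨1, one_pos, fun _ => 1, fun _ => f, fun _ => α, fun _ => zero_le_one, by simp,
    fun _ => hf, fun _ => hα, ?_⟩
  ext z
  simp only [Set.mem_ofPred_eq, one_smul, Fin.sum_univ_one]
  exact ⟨fun hz => ⟨fun _ => z, fun _ => hz, rfl⟩, fun ⟨w, hw, hz⟩ => hz ▸ hw 0⟩

lemma IsConvexCombOfSlices.subset_closedBall {C : Set X} (hC : IsConvexCombOfSlices X C) :
    C ⊆ Metric.closedBall 0 1 := by
  obtain ⟨n, -, lam, f, α, hlam, hsum, -, -, rfl⟩ := hC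
  rintro _ ⟨w, hw, rfl⟩
  rw [mem_closedBall_zero_iff, ← hsum]
  refine (norm_sum_le _ _).trans (Finset.sum_le_sum fun i _ => ?_)
  rw [norm_smul, Real.norm_eq_abs, abs_of_nonneg (hlam i)]
  exact mul_le_of_le_one_right (hlam i) (mem_slice_iff.1 (hw i)).1

lemma IsConvexCombOfSlices.le_diam {C : Set X} (hC : IsConvexCombOfSlices X C) {d : ℝ}
    (h : ∀ (n : ℕ) (f : Fin n → X →L[ℝ] ℝ) (α : Fin n → ℝ), (∀ i, ‖f i‖ = 1) → (∀ i, 0 < α i) →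
      ∃ v : X, ‖v‖ = 1 ∧
        ∀ i, ∃ x ∈ Slice X (f i) (α i), ∃ c ≥ d, x + c • v ∈ Slice X (f i) (α i)) :
    d ≤ Metric.diam C := by
  have hbdd : Bornology.IsBounded C := Metric.isBounded_closedBall.subset hC.subset_closedBall
  obtain ⟨n, -, lam, f, α, hlam, hsum, hf, hα, rfl⟩ := hC
  obtain ⟨v, hv, hx⟩ := h n f α hf hα
  choose x hx c hcd hxc using hx
  have hdiff : ∑ i, lam i • (x i + c i • v) - ∑ i, lam i • x i = (∑ i, lam i * c i) • v := by
    simp only [smul_add, Finset.sum_add_distrib, add_sub_cancel_left, smul_smul, Finset.sum_smul]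
  calc d = ∑ i, lam i * d := by rw [← Finset.sum_mul, hsum, one_mul]
    _ ≤ ∑ i, lam i * c i := Finset.sum_le_sum fun i _ => mul_le_mul_of_nonneg_left (hcd i) (hlam i)
    _ ≤ ‖∑ i, lam i • (x i + c i • v) - ∑ i, lam i • x i‖ := by
      rw [hdiff, norm_smul, hv, mul_one, Real.norm_eq_abs]
      exact le_abs_self _
    _ ≤ Metric.diam _ := by
      rw [← dist_eq_norm]
      exact Metric.dist_le_diam_of_mem hbdd ⟨_, hxc, rfl⟩ ⟨_, hx, rfl⟩

lemma eventually_add_smul_mem_slice {f : X →L[ℝ] ℝ} {α : ℝ} {x : X} (hx : x ∈ Slice X f α)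
    {v : ℕ → X} (hv : Tendsto (fun m => f (v m)) atTop (𝓝 0)) (K : ℝ) :
    ∀ᶠ m in atTop, ∀ c : ℝ, |c| ≤ K → ‖x + c • v m‖ ≤ 1 → x + c • v m ∈ Slice X f α := by
  have hK : Tendsto (fun m => K * |f (v m)|) atTop (𝓝 0) := by
    simpa using hv.abs.const_mul K
  filter_upwards [hK.eventually_lt_const (sub_pos.2 (mem_slice_iff.1 hx).2)] with m hm c hc hnorm
  refine mem_slice_iff.2 ⟨hnorm, ?_⟩
  have : |c * f (v m)| ≤ K * |f (v m)| := by
    rw [abs_mul]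
    exact mul_le_mul_of_nonneg_right hc (abs_nonneg _)
  rw [map_add, map_smul, smul_eq_mul]
  linarith [neg_abs_le (c * f (v m))]

end Slices

namespace BoundedContinuousFunction

def stdBasis (n : ℕ) : ℕ →ᵇ ℝ :=
  ofNormedAddCommGroupDiscrete (Pi.single n 1 : ℕ → ℝ) 1 fun m => by
    rcases eq_or_ne m n with rfl | h <;> simp [*]

@[simp] lemma stdBasis_apply (n m : ℕ) : stdBasis n m = (Pi.single n 1 : ℕ → ℝ) m := rfl

lemma norm_stdBasis (n : ℕ) : ‖stdBasis n‖ = 1 := by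
  refine le_antisymm ((norm_le zero_le_one).2 fun m => ?_) ?_
  · rcases eq_or_ne m n with rfl | h <;> simp [*]
  · simpa using (stdBasis n).norm_coe_le_norm n

lemma norm_add_smul_stdBasis_le {y : ℕ →ᵇ ℝ} {r s : ℝ} (hy : ‖y‖ ≤ r) (hs : |s| ≤ r) (n : ℕ) :
    ‖y + (s - y n) • stdBasis n‖ ≤ r := by
  refine (norm_le ((norm_nonneg y).trans hy)).2 fun m => ?_
  rcases eq_or_ne m n with rfl | h
  · simpa using hs
  · simpa [h] using (y.norm_coe_le_norm m).trans hy

lemma sum_abs_apply_stdBasis_le (g : (ℕ →ᵇ ℝ) →L[ℝ] ℝ) (s : Finset ℕ) :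
    ∑ n ∈ s, |g (stdBasis n)| ≤ ‖g‖ := by
  set y : ℕ →ᵇ ℝ := ∑ n ∈ s, (SignType.sign (g (stdBasis n)) : ℝ) • stdBasis n
  have hy : ‖y‖ ≤ 1 := by
    refine (norm_le zero_le_one).2 fun m => ?_
    simp only [y, coe_sum, coe_smul, Finset.sum_apply, stdBasis_apply,
      smul_eq_mul, Pi.single_apply, mul_ite, mul_one, mul_zero, Finset.sum_ite_eq]
    split_ifs
    · rcases SignType.sign (g (stdBasis m)) with _ | _ | _ <;> simp
    · simp
  calc ∑ n ∈ s, |g (stdBasis n)| = g y := by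
        simp [y, map_sum, sign_mul_self]
    _ ≤ ‖g‖ * ‖y‖ := (le_abs_self _).trans (g.le_opNorm y)
    _ ≤ ‖g‖ := mul_le_of_le_one_right (norm_nonneg g) hy

lemma tendsto_apply_stdBasis (g : (ℕ →ᵇ ℝ) →L[ℝ] ℝ) :
    Tendsto (fun n => g (stdBasis n)) atTop (𝓝 0) :=
  (summable_of_sum_range_le (fun _ => abs_nonneg _)
    fun n => sum_abs_apply_stdBasis_le g (Finset.range n)).of_abs.tendsto_atTop_zero

end BoundedContinuousFunction

/-- `ℝ × Y` with the norm `‖(t, y)‖ = max |t| (a * |t| + ‖y‖)`. -/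
def TiltedProd (_a : ℝ≥0) (Y : Type*) : Type _ := ℝ × Y

section

variable (a : ℝ≥0) (Y : Type*) [NormedAddCommGroup Y] [NormedSpace ℝ Y]

def tiltedSeminorm : Seminorm ℝ (ℝ × Y) :=
  (normSeminorm ℝ ℝ).comp (LinearMap.fst ℝ ℝ Y) ⊔
    (a • (normSeminorm ℝ ℝ).comp (LinearMap.fst ℝ ℝ Y) +
      (normSeminorm ℝ Y).comp (LinearMap.snd ℝ ℝ Y))

lemma tiltedSeminorm_apply (x : ℝ × Y) :
    tiltedSeminorm a Y x = max |x.1| (a * |x.1| + ‖x.2‖) := by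
  simp [tiltedSeminorm, Seminorm.sup_apply, NNReal.smul_def]

namespace TiltedProd

instance : AddCommGroup (TiltedProd a Y) := inferInstanceAs (AddCommGroup (ℝ × Y))

instance : Module ℝ (TiltedProd a Y) := inferInstanceAs (Module ℝ (ℝ × Y))

instance : NormedAddCommGroup (TiltedProd a Y) :=
  AddGroupNorm.toNormedAddCommGroup
    { (tiltedSeminorm a Y).toAddGroupSeminorm with
      eq_zero_of_map_eq_zero' := fun (x : ℝ × Y) hx => by
        change tiltedSeminorm a Y x = 0 at hx
        rw [tiltedSeminorm_apply] at hx
        have h1 : x.1 = 0 := abs_nonpos_iff.1 (hx ▸ le_max_left _ _)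
        have h2 : x.2 = 0 := norm_le_zero_iff.1 <| by
          simpa [h1] using (le_max_right |x.1| (a * |x.1| + ‖x.2‖)).trans hx.le
        exact Prod.ext h1 h2 }

instance : NormedSpace ℝ (TiltedProd a Y) where
  norm_smul_le r x := (map_smul_eq_mul (tiltedSeminorm a Y) r x).le

variable {a Y}

lemma norm_def (x : TiltedProd a Y) : ‖x‖ = max |x.1| (a * |x.1| + ‖x.2‖) :=
  tiltedSeminorm_apply a Y x

lemma norm_le_one_iff {x : TiltedProd a Y} : ‖x‖ ≤ 1 ↔ |x.1| ≤ 1 ∧ a * |x.1| + ‖x.2‖ ≤ 1 := by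
  rw [norm_def, max_le_iff]

variable (a Y)

def linearEquivProd : TiltedProd a Y ≃ₗ[ℝ] ℝ × Y := LinearEquiv.refl ℝ (ℝ × Y)

def equivProd : TiltedProd a Y ≃L[ℝ] ℝ × Y :=
  (linearEquivProd a Y).toContinuousLinearEquivOfBounds 1 (1 + a)
    (fun x => by
      rw [one_mul, norm_def]
      exact max_le_max le_rfl (le_add_of_nonneg_left (by positivity)))
    (fun x => by
      rw [norm_def]
      change max |x.1| (a * |x.1| + ‖x.2‖) ≤ (1 + a) * max |x.1| ‖x.2‖
      have h1 := le_max_left |x.1| ‖x.2‖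
      have h2 := le_max_right |x.1| ‖x.2‖
      apply max_le <;> nlinarith [a.coe_nonneg, abs_nonneg x.1])

instance [CompleteSpace Y] : CompleteSpace (TiltedProd a Y) :=
  (completeSpace_congr (e := (equivProd a Y).toLinearEquiv.toEquiv)
    (equivProd a Y).isUniformEmbedding).2 inferInstance

def fstL : TiltedProd a Y →L[ℝ] ℝ :=
  (LinearMap.fst ℝ ℝ Y ∘ₗ (linearEquivProd a Y).toLinearMap).mkContinuous 1 fun x => by
    rw [one_mul, norm_def]
    exact le_max_left _ _

def inr : Y →ₗᵢ[ℝ] TiltedProd a Y where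
  toLinearMap := (linearEquivProd a Y).symm.toLinearMap ∘ₗ LinearMap.inr ℝ ℝ Y
  norm_map' y := by
    rw [norm_def]
    change max |(0 : ℝ)| (a * |(0 : ℝ)| + ‖y‖) = ‖y‖
    simp

variable {a Y}

@[simp] lemma fstL_apply (x : TiltedProd a Y) : fstL a Y x = x.1 := rfl

lemma norm_fstL (ha : a ≤ 1) : ‖fstL a Y‖ = 1 := by
  refine le_antisymm (LinearMap.mkContinuous_norm_le _ zero_le_one _) ?_
  let x : TiltedProd a Y := ((1, 0) : ℝ × Y)
  have hx : ‖x‖ = 1 := by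
    change max |(1 : ℝ)| (a * |(1 : ℝ)| + ‖(0 : Y)‖) = 1
    simpa using ha
  have h := (fstL a Y).le_opNorm x
  rwa [hx, mul_one, fstL_apply, show x.1 = 1 from rfl, norm_one] at h

@[simp] lemma fst_add_inr (x : TiltedProd a Y) (y : Y) : (x + inr a Y y).1 = x.1 := add_zero x.1

@[simp] lemma snd_add_inr (x : TiltedProd a Y) (y : Y) : (x + inr a Y y).2 = x.2 + y := rfl

lemma diam_slice_fstL_le (ha : a ≤ 1) {α : ℝ} (hα : 0 ≤ α) :
    Metric.diam (Slice (TiltedProd a Y) (fstL a Y) α) ≤ 2 * (1 - a) + 3 * α := by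
  have ha' : (a : ℝ) ≤ 1 := ha
  refine Metric.diam_le_of_forall_dist_le (by linarith) fun u hu v hv => ?_
  obtain ⟨hu, hu'⟩ := mem_slice_iff.1 hu
  obtain ⟨hv, hv'⟩ := mem_slice_iff.1 hv
  obtain ⟨hut, huy⟩ := norm_le_one_iff.1 hu
  obtain ⟨hvt, hvy⟩ := norm_le_one_iff.1 hv
  rw [fstL_apply] at hu' hv'
  have hfst : |(u - v).1| ≤ α := by
    rw [show (u - v).1 = u.1 - v.1 from rfl, abs_sub_le_iff]
    constructor <;> linarith [le_abs_self u.1, le_abs_self v.1]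
  have hsnd : ‖(u - v).2‖ ≤ 2 * (1 - a) + 2 * a * α := by
    have hau : a * (1 - α) ≤ a * |u.1| :=
      mul_le_mul_of_nonneg_left (by linarith [le_abs_self u.1]) a.coe_nonneg
    have hav : a * (1 - α) ≤ a * |v.1| :=
      mul_le_mul_of_nonneg_left (by linarith [le_abs_self v.1]) a.coe_nonneg
    rw [show (u - v).2 = u.2 - v.2 from rfl]
    linarith [norm_sub_le u.2 v.2]
  have hafst : a * |(u - v).1| ≤ a * α := mul_le_mul_of_nonneg_left hfst a.coe_nonneg
  rw [dist_eq_norm, norm_def]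
  apply max_le <;> nlinarith [a.coe_nonneg]

open BoundedContinuousFunction

lemma norm_add_smul_inr_stdBasis_le {w : TiltedProd a (ℕ →ᵇ ℝ)} (hw : ‖w‖ ≤ 1) {s : ℝ}
    (hs : |s| ≤ 1 - a * |w.1|) (m : ℕ) :
    ‖w + (s - w.2 m) • inr a _ (stdBasis m)‖ ≤ 1 := by
  obtain ⟨hw1, hw2⟩ := norm_le_one_iff.1 hw
  rw [← map_smul, norm_le_one_iff, fst_add_inr, snd_add_inr]
  exact ⟨hw1, by linarith [norm_add_smul_stdBasis_le (r := 1 - a * |w.1|) (by linarith) hs m]⟩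

lemma exists_norm_eq_one_forall_add_smul_mem_slice {n : ℕ}
    {f : Fin n → TiltedProd a (ℕ →ᵇ ℝ) →L[ℝ] ℝ} {α : Fin n → ℝ} (hf : ∀ i, ‖f i‖ = 1)
    (hα : ∀ i, 0 < α i) :
    ∃ v : TiltedProd a (ℕ →ᵇ ℝ), ‖v‖ = 1 ∧ ∀ i, ∃ x ∈ Slice _ (f i) (α i),
      ∃ c ≥ 2 * (1 - (a : ℝ)), x + c • v ∈ Slice _ (f i) (α i) := by
  choose w hw using fun i => slice_nonempty (hf i) (hα i)
  have hev : ∀ᶠ m in atTop, ∀ i, ∀ c : ℝ, |c| ≤ 2 → ‖w i + c • inr a _ (stdBasis m)‖ ≤ 1 →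
      w i + c • inr a _ (stdBasis m) ∈ Slice _ (f i) (α i) :=
    eventually_all.2 fun i => eventually_add_smul_mem_slice (hw i)
      (tendsto_apply_stdBasis ((f i).comp (inr a _).toContinuousLinearMap)) 2
  obtain ⟨m, hm⟩ := hev.exists
  refine ⟨inr a _ (stdBasis m), by rw [LinearIsometry.norm_map, norm_stdBasis], fun i => ?_⟩
  have hwi := (mem_slice_iff.1 (hw i)).1
  obtain ⟨hw1, hw2⟩ := norm_le_one_iff.1 hwi
  set r := 1 - a * |(w i).1| with hr_def
  have hr0 : 0 ≤ r := by linarith [norm_nonneg (w i).2]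
  have hr1 : r ≤ 1 := by linarith [mul_nonneg a.coe_nonneg (abs_nonneg (w i).1)]
  have hcoord : |(w i).2 m| ≤ r := by
    linarith [((w i).2).norm_coe_le_norm m, Real.norm_eq_abs ((w i).2 m)]
  have hc : 2 * (1 - (a : ℝ)) ≤ 2 * r := by
    have : a * |(w i).1| ≤ a := mul_le_of_le_one_right a.coe_nonneg hw1
    linarith
  -- Overwriting the `m`-th coordinate of `(w i).2` by any `s ∈ [-r, r]` keeps `w i` in the unit
  -- ball, and, since `f i` barely sees the `m`-th unit vector, in its slice.
  have hmem : ∀ s, |s| ≤ r → w i + (s - (w i).2 m) • inr a _ (stdBasis m) ∈ Slice _ (f i) (α i) :=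
    fun s hs => hm i _ (by linarith [abs_sub s ((w i).2 m)])
      (norm_add_smul_inr_stdBasis_le hwi hs m)
  refine ⟨_, hmem (-r) (by rw [abs_neg, abs_of_nonneg hr0]), 2 * r, hc, ?_⟩
  convert hmem r (abs_of_nonneg hr0).le using 1
  rw [add_assoc, ← add_smul]
  ring_nf

lemma le_diam_of_isConvexCombOfSlices {C : Set (TiltedProd a (ℕ →ᵇ ℝ))}
    (hC : IsConvexCombOfSlices _ C) : 2 * (1 - (a : ℝ)) ≤ Metric.diam C :=
  hC.le_diam fun _ _ _ hf hα => exists_norm_eq_one_forall_add_smul_mem_slice hf hα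

end TiltedProd

end

/-- For any `δ ∈ (1,2]` there is a Banach space in which every convex combination of
slices of the unit ball has diameter at least `δ`, and `δ` is the infimum of such
diameters. -/
theorem exists_banach_min_diam_convexCombOfSlices (δ : ℝ) (h1 : 1 < δ) (h2 : δ ≤ 2) :
    ∃ (X : Type) (i₁ : NormedAddCommGroup X)
      (i₂ : @NormedSpace ℝ X _ i₁.toSeminormedAddCommGroup),
      @CompleteSpace X i₁.toUniformSpace ∧
      (∀ C : Set X, @IsConvexCombOfSlices X i₁ i₂ C → δ ≤ @Metric.diam X _ C) ∧
      (∀ γ : ℝ, δ < γ → ∃ C : Set X, @IsConvexCombOfSlices X i₁ i₂ C ∧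
        @Metric.diam X _ C < γ) := by
  set a : ℝ≥0 := (1 - δ / 2).toNNReal
  have ha : (a : ℝ) = 1 - δ / 2 := Real.coe_toNNReal _ (by linarith)
  have ha1 : a ≤ 1 := by rw [← NNReal.coe_le_coe, ha, NNReal.coe_one]; linarith
  refine ⟨TiltedProd a (ℕ →ᵇ ℝ), inferInstance, inferInstance, inferInstance,
    fun C hC => ?_, fun γ hγ => ?_⟩
  · linarith [TiltedProd.le_diam_of_isConvexCombOfSlices hC]
  · have hα : 0 < (γ - δ) / 4 := by linarith
    refine ⟨_, isConvexCombOfSlices_slice (TiltedProd.norm_fstL ha1) hα, ?_⟩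
    linarith [TiltedProd.diam_slice_fstL_le (Y := ℕ →ᵇ ℝ) ha1 hα.le]
end
end

section
/- Let N be an absolute normalized norm on ℝ² such that (1,0) is an extreme point of the unit ball of (ℝ², N). Then for every ε > 0 there is a γ > 0 such that, whenever (a,b) ∈ ℝ² with N(a,b) ≤ 1 and a > 1 − γ, one has |b| < ε. -/
noncomputable section

/-- An absolute normalized norm on `ℝ²`. -/
structure AbsoluteNormalizedNorm where
  toFun : ℝ × ℝ → ℝ
  add_le : ∀ u v : ℝ × ℝ, toFun (u + v) ≤ toFun u + toFun v
  smul_eq : ∀ (r : ℝ) (u : ℝ × ℝ), toFun (r • u) = |r| * toFun u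
  eq_zero : ∀ u : ℝ × ℝ, toFun u = 0 → u = 0
  absolute : ∀ a b : ℝ, toFun (a, b) = toFun (|a|, |b|)
  norm_one_zero : toFun (1, 0) = 1
  norm_zero_one : toFun (0, 1) = 1

/-- `e` is an extreme point of the set `C`. -/
def IsExtremePointOf (C : Set (ℝ × ℝ)) (e : ℝ × ℝ) : Prop :=
  e ∈ C ∧ ∀ u ∈ C, ∀ v ∈ C, ∀ t : ℝ, 0 < t → t < 1 →
    e = t • u + (1 - t) • v → u = e ∧ v = e

lemma absNorm_neg_snd (N : AbsoluteNormalizedNorm) (a b : ℝ) :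
    N.toFun (a, -b) = N.toFun (a, b) := by
  rw [N.absolute a (-b), abs_neg, ← N.absolute]

/-- Monotonicity in the second coordinate. -/
lemma absNorm_mono2 (N : AbsoluteNormalizedNorm) (a b b' : ℝ) (hb : 0 ≤ b) (hbb : b ≤ b') :
    N.toFun (a, b) ≤ N.toFun (a, b') := by
  rcases eq_or_lt_of_le (hb.trans hbb) with h0 | h0
  · have : b = 0 := le_antisymm (hbb.trans h0.symm.le) hb
    rw [this, ← h0]
  · set t : ℝ := (b' + b) / (2 * b') with ht
    have ht0 : 0 ≤ t := by positivity
    have ht1 : t ≤ 1 := by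
      rw [ht, div_le_one (by linarith)]; linarith
    have key : ((a, b) : ℝ × ℝ) = t • (a, b') + (1 - t) • (a, -b') := by
      have h2 : (2 : ℝ) * b' ≠ 0 := by positivity
      simp only [Prod.smul_mk, Prod.mk_add_mk, smul_eq_mul, Prod.mk.injEq]
      constructor
      · ring
      · have ht' : t * (2 * b') = b' + b := by rw [ht]; exact div_mul_cancel₀ _ h2
        linear_combination -ht'
    calc N.toFun (a, b) = N.toFun (t • (a, b') + (1 - t) • (a, -b')) := by rw [← key]
      _ ≤ N.toFun (t • (a, b')) + N.toFun ((1 - t) • (a, -b')) := N.add_le _ _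
      _ = t * N.toFun (a, b') + (1 - t) * N.toFun (a, -b') := by
          rw [N.smul_eq, N.smul_eq, abs_of_nonneg ht0, abs_of_nonneg (by linarith)]
      _ = N.toFun (a, b') := by rw [absNorm_neg_snd]; ring

lemma absNorm_fst (N : AbsoluteNormalizedNorm) (a : ℝ) : N.toFun (a, 0) = |a| := by
  have : ((a, 0) : ℝ × ℝ) = a • (1, 0) := by simp
  rw [this, N.smul_eq, N.norm_one_zero, mul_one]

lemma absNorm_one_pos (N : AbsoluteNormalizedNorm)
    (h : IsExtremePointOf {u : ℝ × ℝ | N.toFun u ≤ 1} (1, 0))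
    (ε : ℝ) (hε : 0 < ε) : 1 < N.toFun (1, ε) := by
  by_contra hle
  push_neg at hle
  have hu : ((1, ε) : ℝ × ℝ) ∈ {u : ℝ × ℝ | N.toFun u ≤ 1} := hle
  have hv : ((1, -ε) : ℝ × ℝ) ∈ {u : ℝ × ℝ | N.toFun u ≤ 1} := by
    simpa [absNorm_neg_snd] using hle
  have hmid : ((1, 0) : ℝ × ℝ) = (1/2 : ℝ) • (1, ε) + (1 - 1/2 : ℝ) • (1, -ε) := by
    simp only [Prod.smul_mk, Prod.mk_add_mk, smul_eq_mul, Prod.mk.injEq]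
    norm_num
  have := (h.2 _ hu _ hv (1/2) (by norm_num) (by norm_num) hmid).1
  have : ε = 0 := by simpa [Prod.ext_iff] using this
  linarith

/-- If `(1,0)` is an extreme point of the unit ball of `(ℝ², N)`, then for every `ε > 0`
there is `γ > 0` such that `N(a,b) ≤ 1` and `a > 1 - γ` imply `|b| < ε`. -/
theorem extremePoint_absNorm (N : AbsoluteNormalizedNorm)
    (h : IsExtremePointOf {u : ℝ × ℝ | N.toFun u ≤ 1} (1, 0)) :
    ∀ ε > (0 : ℝ), ∃ γ > (0 : ℝ), ∀ a b : ℝ, N.toFun (a, b) ≤ 1 → 1 - γ < a → |b| < ε := by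
  intro ε hε
  set δ : ℝ := N.toFun (1, ε) - 1 with hδ
  have hδ0 : 0 < δ := by
    have := absNorm_one_pos N h ε hε
    simp [hδ]; linarith
  refine ⟨min δ (1/2), lt_min hδ0 (by norm_num), ?_⟩
  intro a b hN ha
  by_contra hbε
  push_neg at hbε
  -- a is positive
  have ha2 : (1 : ℝ)/2 < a := by
    have : min δ (1/2 : ℝ) ≤ 1/2 := min_le_right _ _
    linarith
  have haabs : |a| = a := abs_of_pos (by linarith)
  -- a ≤ 1
  have ha1 : a ≤ 1 := by
    have h1 : N.toFun (a, 0) ≤ N.toFun (a, |b|) :=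
      absNorm_mono2 N a 0 |b| le_rfl (abs_nonneg b)
    have h2 : N.toFun (a, |b|) = N.toFun (a, b) := by
      rw [N.absolute a b, N.absolute a |b|, abs_abs]
    rw [absNorm_fst, haabs] at h1
    linarith [h2 ▸ h1]
  -- N (a, ε) ≤ N (a, b)
  have hmono : N.toFun (a, ε) ≤ N.toFun (a, b) := by
    have := absNorm_mono2 N a ε |b| hε.le hbε
    rw [N.absolute a b, N.absolute a |b|, abs_abs] at *
    linarith
  -- triangle: N (1, ε) ≤ N (a, ε) + (1 - a)
  have htri : N.toFun (1, ε) ≤ N.toFun (a, ε) + (1 - a) := by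
    have heq : ((1, ε) : ℝ × ℝ) = (a, ε) + (1 - a, 0) := by
      simp [Prod.ext_iff]
    calc N.toFun (1, ε) = N.toFun ((a, ε) + (1 - a, 0)) := by rw [← heq]
      _ ≤ N.toFun (a, ε) + N.toFun (1 - a, 0) := N.add_le _ _
      _ = N.toFun (a, ε) + (1 - a) := by rw [absNorm_fst, abs_of_nonneg (by linarith)]
  have hγδ : min δ (1/2 : ℝ) ≤ δ := min_le_left _ _
  simp only [hδ] at hγδ
  linarith
end
end
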